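/- arXiv:1504.04891 — 6 statements merged into one kernel-verified Lean document; each statement's English description precedes it below -/
import Mathlib

section
/- Let d ≥ 1 and for each n ∈ ℕ let c_n = (c_{n,j})_{j∈ℤ^d} be square-summable real numbers with ‖c_n‖² := Σ_{j∈ℤ^d} c_{n,j}² > 0. If for every q ∈ {1,…,d}, lim_{n→∞} ‖c_n‖^{-2} Σ_{j∈ℤ^d} |c_{n,j}² − c_{n,j+e_q}²| = 0, where e_q is the q-th canonical basis vector of ℤ^d, then lim_{n→∞} ‖c_n‖^{-1} sup_{j∈ℤ^d} |c_{n,j}| = 0. -/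
/-!
Write `f = c_n²`, which tends to `0` at infinity because it is summable. Along the ray
`j, j + e_q, j + 2e_q, …` telescoping gives `f j = Σ_m (f (j + m e_q) - f (j + (m+1) e_q))`,
so `c_{n,j}² ≤ Σ_x |c_{n,x}² - c_{n,x+e_q}²|` for every `j` and a single direction `q`.
Taking the supremum over `j` and dividing by `‖c_n‖²` bounds the square of the quantity of
interest by the normalized translation sum in direction `q`, which tends to `0`.
-/

open Filter Topology

lemma abs_sub_add_nsmul_le_sum_range {G : Type*} [AddMonoid G] (f : G → ℝ) (j v : G) (m : ℕ) :
    |f j - f (j + m • v)| ≤ ∑ i ∈ Finset.range m, |f (j + i • v) - f (j + i • v + v)| := by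
  have htelescope := Finset.sum_range_sub' (fun i => f (j + i • v)) m
  simp only [zero_smul, add_zero, succ_nsmul, ← add_assoc] at htelescope
  rw [← htelescope]
  exact Finset.abs_sum_le_sum_abs _ _

lemma injective_add_nsmul_of_not_isOfFinAddOrder {G : Type*} [AddLeftCancelMonoid G] {v : G}
    (hv : ¬IsOfFinAddOrder v) (j : G) : Function.Injective fun i : ℕ => j + i • v :=
  (add_right_injective j).comp (injective_nsmul_iff_not_isOfFinAddOrder.mpr hv)

lemma abs_sub_add_nsmul_le_tsum {G : Type*} [AddLeftCancelMonoid G] {f : G → ℝ} {v : G}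
    (hv : ¬IsOfFinAddOrder v) (hsum : Summable fun x => |f x - f (x + v)|) (j : G) (m : ℕ) :
    |f j - f (j + m • v)| ≤ ∑' x, |f x - f (x + v)| := by
  have hray := injective_add_nsmul_of_not_isOfFinAddOrder hv j
  calc |f j - f (j + m • v)|
      ≤ ∑ i ∈ Finset.range m, |f (j + i • v) - f (j + i • v + v)| :=
        abs_sub_add_nsmul_le_sum_range f j v m
    _ ≤ ∑' i : ℕ, |f (j + i • v) - f (j + i • v + v)| :=
        (hsum.comp_injective hray).sum_le_tsum _ fun _ _ => abs_nonneg _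
    _ ≤ ∑' x, |f x - f (x + v)| :=
        tsum_comp_le_tsum_of_inj hsum (fun _ => abs_nonneg _) hray

lemma abs_le_tsum_abs_sub_add_of_tendsto_cofinite {G : Type*} [AddLeftCancelMonoid G]
    {f : G → ℝ} (hf : Tendsto f cofinite (𝓝 0)) {v : G} (hv : ¬IsOfFinAddOrder v)
    (hsum : Summable fun x => |f x - f (x + v)|) (j : G) :
    |f j| ≤ ∑' x, |f x - f (x + v)| := by
  have hray : Tendsto (fun m : ℕ => f (j + m • v)) atTop (𝓝 0) := by
    rw [← Nat.cofinite_eq_atTop]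
    exact hf.comp (injective_add_nsmul_of_not_isOfFinAddOrder hv j).tendsto_cofinite
  have hlim : Tendsto (fun m : ℕ => |f j - f (j + m • v)|) atTop (𝓝 |f j|) := by
    simpa using (tendsto_const_nhds.sub hray).abs
  exact le_of_tendsto' hlim (abs_sub_add_nsmul_le_tsum hv hsum j)

lemma iSup_abs_le_sqrt_tsum_abs_sq_sub_sq {G : Type*} [AddCancelMonoid G] {c : G → ℝ}
    (hc : Summable fun j => c j ^ 2) {v : G} (hv : ¬IsOfFinAddOrder v) :
    ⨆ j, |c j| ≤ √(∑' x, |c x ^ 2 - c (x + v) ^ 2|) := by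
  have hsum : Summable fun x => |c x ^ 2 - c (x + v) ^ 2| :=
    (hc.sub (hc.comp_injective (add_left_injective v))).abs
  refine Real.iSup_le (fun j => ?_) (Real.sqrt_nonneg _)
  rw [← Real.sqrt_sq_eq_abs]
  exact Real.sqrt_le_sqrt <| (le_abs_self _).trans
    (abs_le_tsum_abs_sub_add_of_tendsto_cofinite hc.tendsto_cofinite_zero hv hsum j)

theorem sup_coefficients_negligible_of_translation_condition_general
    {d : ℕ} (hd : 1 ≤ d) (c : ℕ → (Fin d → ℤ) → ℝ)
    (hsq : ∀ n, Summable (fun j : Fin d → ℤ => c n j ^ 2))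
    (hdiff : ∀ q : Fin d,
      Tendsto (fun n =>
          (∑' j : Fin d → ℤ, |c n j ^ 2 - c n (j + Pi.single q 1) ^ 2|) /
            (∑' j : Fin d → ℤ, c n j ^ 2))
        atTop (nhds 0)) :
    Tendsto (fun n =>
        (⨆ j : Fin d → ℤ, |c n j|) / Real.sqrt (∑' j : Fin d → ℤ, c n j ^ 2))
      atTop (nhds 0) := by
  let q : Fin d := ⟨0, hd⟩
  have hq : ¬IsOfFinAddOrder (Pi.single q 1 : Fin d → ℤ) :=
    not_isOfFinAddOrder_of_isAddTorsionFree (Pi.single_ne_zero_iff.mpr one_ne_zero)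
  have hbound : ∀ n, (⨆ j, |c n j|) / √(∑' j, c n j ^ 2) ≤
      √((∑' j, |c n j ^ 2 - c n (j + Pi.single q 1) ^ 2|) / ∑' j, c n j ^ 2) := fun n => by
    rw [Real.sqrt_div' _ (tsum_nonneg fun j => sq_nonneg _)]
    gcongr
    exact iSup_abs_le_sqrt_tsum_abs_sq_sub_sq (hsq n) hq
  refine squeeze_zero (fun n => ?_) hbound (by simpa using (hdiff q).sqrt)
  exact div_nonneg (Real.iSup_nonneg fun j => abs_nonneg _) (Real.sqrt_nonneg _)

/-- If `(c_n)` are square-summable families indexed by `ℤ^d` with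
positive `ℓ²` norm, and for every coordinate direction `q` the normalized sums
`‖c_n‖⁻² Σ_j |c_{n,j}² − c_{n,j+e_q}²|` tend to `0`, then
`‖c_n‖⁻¹ sup_j |c_{n,j}|` tends to `0`. -/
theorem sup_coefficients_negligible_of_translation_condition
    {d : ℕ} (hd : 1 ≤ d) (c : ℕ → (Fin d → ℤ) → ℝ)
    (hsq : ∀ n, Summable (fun j : Fin d → ℤ => c n j ^ 2))
    (hpos : ∀ n, 0 < ∑' j : Fin d → ℤ, c n j ^ 2)
    (hdiff : ∀ q : Fin d,
      Tendsto (fun n =>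
          (∑' j : Fin d → ℤ, |c n j ^ 2 - c n (j + Pi.single q 1) ^ 2|) /
            (∑' j : Fin d → ℤ, c n j ^ 2))
        atTop (nhds 0)) :
    Tendsto (fun n =>
        (⨆ j : Fin d → ℤ, |c n j|) / Real.sqrt (∑' j : Fin d → ℤ, c n j ^ 2))
      atTop (nhds 0) :=
  sup_coefficients_negligible_of_translation_condition_general hd c hsq hdiff
end

section
/- Let d ≥ 1 and for each n ∈ ℕ let c_n = (c_{n,j})_{j∈ℤ^d} be square-summable real numbers with ‖c_n‖² := Σ_{j∈ℤ^d} c_{n,j}² > 0. If for every q ∈ {1,…,d}, lim_{n→∞} ‖c_n‖^{-2} Σ_{j∈ℤ^d} (c_{n,j} − c_{n,j+e_q})² = 0, then lim_{n→∞} ‖c_n‖^{-2} Σ_{j∈ℤ^d} |c_{n,j}² − c_{n,j+e_q}²| = 0 for every q, and consequently lim_{n→∞} ‖c_n‖^{-1} sup_{j∈ℤ^d} |c_{n,j}| = 0. -/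
/-!
Since `c_j² - c_{j+e}² = (c_j + c_{j+e})(c_j - c_{j+e})` and `Σ (c_j + c_{j+e})² ≤ 4‖c‖²`,
Cauchy–Schwarz gives `Σ |c_j² - c_{j+e}²| ≤ 2 ‖c‖ (Σ (c_j - c_{j+e})²)^{1/2}`, which is the first
claim. For the second, the squares along the ray `j, j + e, j + 2e, …` tend to `0`, so telescoping
bounds `c_j²` by `Σ_k |c_k² - c_{k+e}²|` for every `j`.
-/

open Filter

theorem Summable.sq_add {ι : Type*} {f g : ι → ℝ} (hf : Summable fun i => f i ^ 2)
    (hg : Summable fun i => g i ^ 2) : Summable fun i => (f i + g i) ^ 2 :=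
  .of_nonneg_of_le (fun _ => sq_nonneg _) (fun i => by nlinarith [sq_nonneg (f i - g i)])
    ((hf.add hg).mul_left 2)

theorem Real.tsum_abs_mul_le_sqrt_mul_sqrt {ι : Type*} {f g : ι → ℝ}
    (hf : Summable fun i => f i ^ 2) (hg : Summable fun i => g i ^ 2) :
    ∑' i, |f i * g i| ≤ √(∑' i, f i ^ 2) * √(∑' i, g i ^ 2) := by
  have hsq : ∀ h : ι → ℝ, (fun i => |h i| ^ (2 : ℝ)) = fun i => h i ^ 2 := fun h => by
    ext i; rw [Real.rpow_two, sq_abs]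
  have := inner_le_Lp_mul_Lq_tsum_of_nonneg Real.HolderConjugate.two_two
    (fun i => abs_nonneg (f i)) (fun i => abs_nonneg (g i))
    (by rwa [hsq]) (by rwa [hsq])
  simpa only [hsq, ← abs_mul, ← Real.sqrt_eq_rpow] using this

theorem le_tsum_abs_sub_succ_of_tendsto_zero {f : ℕ → ℝ} (hf : Tendsto f atTop (nhds 0))
    (hsum : Summable fun t => |f t - f (t + 1)|) : f 0 ≤ ∑' t, |f t - f (t + 1)| := by
  refine ge_of_tendsto' (by simpa using hf.add_const (∑' t, |f t - f (t + 1)|)) fun N => ?_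
  calc f 0 = f N + ∑ t ∈ Finset.range N, (f t - f (t + 1)) := by
        rw [Finset.sum_range_sub']; ring
    _ ≤ f N + ∑ t ∈ Finset.range N, |f t - f (t + 1)| := by
        gcongr with t; exact le_abs_self _
    _ ≤ f N + ∑' t, |f t - f (t + 1)| := by
        gcongr; exact hsum.sum_le_tsum _ fun t _ => abs_nonneg _

section Shift

variable {G : Type*} [AddGroup G] {c : G → ℝ}

theorem Summable.comp_add_right (hc : Summable c) (e : G) : Summable fun j => c (j + e) :=
  hc.comp_injective (add_left_injective e)

theorem summable_abs_sq_sub_sq_shift (hc : Summable fun j => c j ^ 2) (e : G) :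
    Summable fun j => |c j ^ 2 - c (j + e) ^ 2| :=
  .of_nonneg_of_le (fun _ => abs_nonneg _)
    (fun j => (abs_sub _ _).trans_eq (by simp only [abs_pow, sq_abs]))
    (hc.add (hc.comp_add_right e))

theorem tsum_sq_add_shift_le (hc : Summable fun j => c j ^ 2) (e : G) :
    ∑' j, (c j + c (j + e)) ^ 2 ≤ 4 * ∑' j, c j ^ 2 := by
  have hce := hc.comp_add_right e
  calc ∑' j, (c j + c (j + e)) ^ 2 ≤ ∑' j, (2 * c j ^ 2 + 2 * c (j + e) ^ 2) :=
        Summable.tsum_le_tsum (fun j => by nlinarith [sq_nonneg (c j - c (j + e))])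
          (hc.sq_add hce) ((hc.mul_left 2).add (hce.mul_left 2))
    _ = 4 * ∑' j, c j ^ 2 := by
        rw [(hc.mul_left 2).tsum_add (hce.mul_left 2), tsum_mul_left, tsum_mul_left,
          show ∑' j, c (j + e) ^ 2 = ∑' j, c j ^ 2 from
            (Equiv.addRight e).tsum_eq fun j => c j ^ 2]
        ring

theorem tsum_abs_sq_sub_sq_shift_le (hc : Summable fun j => c j ^ 2) (e : G) :
    ∑' j, |c j ^ 2 - c (j + e) ^ 2|
      ≤ 2 * √(∑' j, c j ^ 2) * √(∑' j, (c j - c (j + e)) ^ 2) := by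
  have hce : Summable fun j => (-c (j + e)) ^ 2 := by simpa using hc.comp_add_right e
  calc ∑' j, |c j ^ 2 - c (j + e) ^ 2| = ∑' j, |(c j + c (j + e)) * (c j - c (j + e))| := by
        simp only [← sq_sub_sq]
    _ ≤ √(∑' j, (c j + c (j + e)) ^ 2) * √(∑' j, (c j - c (j + e)) ^ 2) :=
        Real.tsum_abs_mul_le_sqrt_mul_sqrt (hc.sq_add (by simpa using hce))
          (by simpa [← sub_eq_add_neg] using hc.sq_add hce)
    _ ≤ √(4 * ∑' j, c j ^ 2) * √(∑' j, (c j - c (j + e)) ^ 2) := by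
        gcongr; exact tsum_sq_add_shift_le hc e
    _ = 2 * √(∑' j, c j ^ 2) * √(∑' j, (c j - c (j + e)) ^ 2) := by
        rw [Real.sqrt_mul' _ (tsum_nonneg fun _ => sq_nonneg _),
          show (4 : ℝ) = 2 ^ 2 by norm_num, Real.sqrt_sq zero_le_two]

theorem tsum_abs_sq_sub_sq_shift_div_le (hc : Summable fun j => c j ^ 2) (e : G) :
    (∑' j, |c j ^ 2 - c (j + e) ^ 2|) / ∑' j, c j ^ 2
      ≤ 2 * √((∑' j, (c j - c (j + e)) ^ 2) / ∑' j, c j ^ 2) := by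
  set S := ∑' j, c j ^ 2
  calc (∑' j, |c j ^ 2 - c (j + e) ^ 2|) / S
      ≤ 2 * √S * √(∑' j, (c j - c (j + e)) ^ 2) / S := by
        gcongr; exact tsum_abs_sq_sub_sq_shift_le hc e
    _ = 2 * √((∑' j, (c j - c (j + e)) ^ 2) / S) := by
        rw [Real.sqrt_div' _ (tsum_nonneg fun _ => sq_nonneg _), mul_right_comm, mul_div_assoc,
          Real.sqrt_div_self']
        ring

theorem sq_le_tsum_abs_sq_sub_sq_shift (hc : Summable fun j => c j ^ 2) {e : G}
    (he : ¬IsOfFinAddOrder e) (j : G) : c j ^ 2 ≤ ∑' k, |c k ^ 2 - c (k + e) ^ 2| := by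
  set g : ℕ → G := fun t => j + t • e
  have hg : Function.Injective g :=
    (add_right_injective j).comp (injective_nsmul_iff_not_isOfFinAddOrder.mpr he)
  have hg_succ (t : ℕ) : g (t + 1) = g t + e := by simp only [g, succ_nsmul, add_assoc]
  have hA := summable_abs_sq_sub_sq_shift hc e
  calc c j ^ 2 = c (g 0) ^ 2 := by simp [g]
    _ ≤ ∑' t, |c (g t) ^ 2 - c (g (t + 1)) ^ 2| := by
        refine le_tsum_abs_sub_succ_of_tendsto_zero
          (hc.comp_injective hg).tendsto_atTop_zero ?_
        simpa only [Function.comp_def, hg_succ] using hA.comp_injective hg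
    _ ≤ ∑' k, |c k ^ 2 - c (k + e) ^ 2| := by
        simpa only [Function.comp_def, hg_succ] using
          tsum_comp_le_tsum_of_inj hA (fun _ => abs_nonneg _) hg

theorem iSup_abs_div_sqrt_le (hc : Summable fun j => c j ^ 2) {e : G}
    (he : ¬IsOfFinAddOrder e) :
    (⨆ j, |c j|) / √(∑' j, c j ^ 2)
      ≤ √((∑' j, |c j ^ 2 - c (j + e) ^ 2|) / ∑' j, c j ^ 2) := by
  rw [Real.sqrt_div' _ (tsum_nonneg fun _ => sq_nonneg _)]
  gcongr
  exact ciSup_le fun j => Real.abs_le_sqrt (sq_le_tsum_abs_sq_sub_sq_shift hc he j)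

end Shift

theorem translation_square_condition_implies_sup_negligible_general
    {d : ℕ} (hd : 1 ≤ d) (c : ℕ → (Fin d → ℤ) → ℝ)
    (hsq : ∀ n, Summable (fun j : Fin d → ℤ => c n j ^ 2))
    (hdiff : ∀ q : Fin d,
      Tendsto (fun n =>
          (∑' j : Fin d → ℤ, (c n j - c n (j + Pi.single q 1)) ^ 2) /
            (∑' j : Fin d → ℤ, c n j ^ 2))
        atTop (nhds 0)) :
    (∀ q : Fin d,
      Tendsto (fun n =>
          (∑' j : Fin d → ℤ, |c n j ^ 2 - c n (j + Pi.single q 1) ^ 2|) /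
            (∑' j : Fin d → ℤ, c n j ^ 2))
        atTop (nhds 0)) ∧
    Tendsto (fun n =>
        (⨆ j : Fin d → ℤ, |c n j|) / Real.sqrt (∑' j : Fin d → ℤ, c n j ^ 2))
      atTop (nhds 0) := by
  have hsum_sq_sub_sq (q : Fin d) : Tendsto (fun n =>
      (∑' j, |c n j ^ 2 - c n (j + Pi.single q 1) ^ 2|) / ∑' j, c n j ^ 2) atTop (nhds 0) :=
    squeeze_zero (fun n => div_nonneg (tsum_nonneg fun _ => abs_nonneg _)
        (tsum_nonneg fun _ => sq_nonneg _))
      (fun n => tsum_abs_sq_sub_sq_shift_div_le (hsq n) _)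
      (by simpa using ((hdiff q).sqrt.const_mul 2))
  refine ⟨hsum_sq_sub_sq, ?_⟩
  let q₀ : Fin d := ⟨0, hd⟩
  have he : ¬IsOfFinAddOrder (Pi.single q₀ 1 : Fin d → ℤ) :=
    not_isOfFinAddOrder_of_isAddTorsionFree (by simp)
  exact squeeze_zero
    (fun n => div_nonneg (Real.iSup_nonneg fun _ => abs_nonneg _) (Real.sqrt_nonneg _))
    (fun n => iSup_abs_div_sqrt_le (hsq n) he)
    (by simpa using (hsum_sq_sub_sq q₀).sqrt)

/-- If `(c_n)` are square-summable families indexed by `ℤ^d` with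
positive `ℓ²` norm and for every coordinate direction `q` one has
`‖c_n‖⁻² Σ_j (c_{n,j} − c_{n,j+e_q})² → 0`, then also
`‖c_n‖⁻² Σ_j |c_{n,j}² − c_{n,j+e_q}²| → 0` for every `q`, and consequently
`‖c_n‖⁻¹ sup_j |c_{n,j}| → 0`. -/
theorem translation_square_condition_implies_sup_negligible
    {d : ℕ} (hd : 1 ≤ d) (c : ℕ → (Fin d → ℤ) → ℝ)
    (hsq : ∀ n, Summable (fun j : Fin d → ℤ => c n j ^ 2))
    (hpos : ∀ n, 0 < ∑' j : Fin d → ℤ, c n j ^ 2)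
    (hdiff : ∀ q : Fin d,
      Tendsto (fun n =>
          (∑' j : Fin d → ℤ, (c n j - c n (j + Pi.single q 1)) ^ 2) /
            (∑' j : Fin d → ℤ, c n j ^ 2))
        atTop (nhds 0)) :
    (∀ q : Fin d,
      Tendsto (fun n =>
          (∑' j : Fin d → ℤ, |c n j ^ 2 - c n (j + Pi.single q 1) ^ 2|) /
            (∑' j : Fin d → ℤ, c n j ^ 2))
        atTop (nhds 0)) ∧
    Tendsto (fun n =>
        (⨆ j : Fin d → ℤ, |c n j|) / Real.sqrt (∑' j : Fin d → ℤ, c n j ^ 2))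
      atTop (nhds 0) :=
  translation_square_condition_implies_sup_negligible_general hd c hsq hdiff
end

section
/- Let μ be a probability measure on ℤ^d whose support is contained in {1,2,…}^d. Let (Z_i)_{i∈ℤ^d} be i.i.d. random vectors with common law μ, define f : ℤ^d → ℤ^d by f(i) = i − Z_i, and for n ∈ ℤ^d define the ancestral line A_n = {f^{∘m}(n) : m ∈ ℕ} as the forward orbit of n under f; set q_k = P(0 ∈ A_k) for k ∈ ℤ^d. Assume Σ_{k∈ℕ^d} q_k² < ∞. Then for every n ∈ ℤ^d, the series Σ_{k∈ℤ^d} q_k q_{k+n} converges and P(A_0 ∩ A_n ≠ ∅) · Σ_{k∈ℕ^d} q_k² = Σ_{k∈ℤ^d} q_k q_{k+n}. -/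
/-!
Encode a path in `ℤ^d` by the list of its steps. A path with positive steps never revisits a
site, so by independence the ancestral line of `a` follows a given path with probability the
product of the `μ`-masses of its steps. Hence `q_k` is the total weight of the positive paths
from `k` to `0`, and, since ancestral lines coalesce once they meet, `P(A_0 ∩ A_n ≠ ∅)` is the
total weight of the pairs of paths from `0` and from `n` that stop at their first common point.
Cutting a pair of paths from `0` and `n` with a common endpoint at their first common point is
a bijection onto such first-meeting pairs times pairs of paths with common start and end, which
gives `∑ q_k q_{k+n} = P(A_0 ∩ A_n ≠ ∅) · ∑ q_k²` in `[0, ∞]`; finiteness of `∑ q_k²` transfers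
it to `ℝ`.
-/

open Function MeasureTheory ProbabilityTheory
open scoped ENNReal

lemma ENNReal.tsum_mul_tsum {α β : Type*} (f : α → ℝ≥0∞) (g : β → ℝ≥0∞) :
    (∑' a, f a) * ∑' b, g b = ∑' p : α × β, f p.1 * g p.2 := by
  rw [ENNReal.tsum_prod (f := fun a b => f a * g b), ← ENNReal.tsum_mul_right]
  simp_rw [ENNReal.tsum_mul_left]

lemma MeasureTheory.measure_eq_tsum_of_ae_subset_iUnion {Ω ι : Type*} [MeasurableSpace Ω]
    [Countable ι] {P : Measure Ω} {E : Set Ω} {F : ι → Set Ω} (hF : ∀ i, MeasurableSet (F i))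
    (hdisj : Pairwise (Disjoint on F)) (hsub : ∀ i, F i ⊆ E)
    (hcov : ∀ᵐ ω ∂P, ω ∈ E → ∃ i, ω ∈ F i) : P E = ∑' i, P (F i) := by
  rw [← measure_iUnion hdisj hF]
  refine le_antisymm (measure_mono_ae ?_) (measure_mono (Set.iUnion_subset hsub))
  filter_upwards [hcov] with ω hω using fun hE => Set.mem_iUnion.2 (hω hE)

lemma ENNReal.toReal_mul_tsum_eq {ι κ : Type*} {a : ℝ≥0∞} {f : ι → ℝ≥0∞} {g : κ → ℝ≥0∞}
    (ha : a ≠ ⊤) (hf : ∀ i, f i ≠ ⊤) (hfs : Summable fun i => (f i).toReal)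
    (h : a * ∑' i, f i = ∑' k, g k) :
    Summable (fun k => (g k).toReal) ∧ a.toReal * ∑' i, (f i).toReal = ∑' k, (g k).toReal := by
  have hf' : ∑' i, f i ≠ ⊤ := by
    have := ENNReal.ofReal_tsum_of_nonneg (fun i => ENNReal.toReal_nonneg) hfs
    simp_rw [ENNReal.ofReal_toReal (hf _)] at this
    exact this ▸ ENNReal.ofReal_ne_top
  have hg : ∑' k, g k ≠ ⊤ := h ▸ ENNReal.mul_ne_top ha hf'
  refine ⟨ENNReal.summable_toReal hg, ?_⟩
  rw [← ENNReal.tsum_toReal_eq hf, ← ENNReal.tsum_toReal_eq (ENNReal.ne_top_of_tsum_ne_top hg),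
    ← ENNReal.toReal_mul, h]

lemma tsum_natCast_eq_tsum {d : ℕ} {α : Type*} [AddCommMonoid α] [TopologicalSpace α]
    {f : (Fin d → ℤ) → α} (hf : ∀ k, f k ≠ 0 → 0 ≤ k) :
    ∑' k : Fin d → ℕ, f (fun i => (k i : ℤ)) = ∑' k, f k := by
  refine Injective.tsum_eq (fun k k' h => funext fun i => by exact_mod_cast congrFun h i)
    fun k hk => ?_
  exact ⟨fun i => (k i).toNat, funext fun i => Int.toNat_of_nonneg (hf k hk i)⟩

namespace AncestralLines

variable {d : ℕ}

/-- A path is encoded by the list of its steps: the path `s` from `a` visits the points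
`a - (s.take i).sum`, `i ≤ s.length`. -/
def IsPosPath (s : List (Fin d → ℤ)) : Prop := ∀ z ∈ s, ∀ i, 1 ≤ z i

namespace IsPosPath

variable {s t : List (Fin d → ℤ)}

lemma append (hs : IsPosPath s) (ht : IsPosPath t) : IsPosPath (s ++ t) := by
  intro z hz
  rcases List.mem_append.1 hz with hz | hz
  exacts [hs z hz, ht z hz]

lemma sublist (ht : IsPosPath t) (h : s.Sublist t) : IsPosPath s :=
  fun z hz => ht z (h.subset hz)

lemma length_le_sum_apply (hs : IsPosPath s) (c : Fin d) : (s.length : ℤ) ≤ s.sum c := by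
  induction s with
  | nil => simp
  | cons z s ih =>
    have hz := hs z List.mem_cons_self c
    have := ih fun y hy => hs y (List.mem_cons_of_mem z hy)
    simp only [List.length_cons, List.sum_cons, Pi.add_apply]
    omega

lemma sum_apply_add_length_le_of_isPrefix (ht : IsPosPath t) (h : s <+: t) (c : Fin d) :
    s.sum c + (t.length - s.length : ℤ) ≤ t.sum c := by
  obtain ⟨r, rfl⟩ := h
  have := (ht.sublist (List.sublist_append_right s r)).length_le_sum_apply c
  simp only [List.sum_append, Pi.add_apply, List.length_append]
  omega

lemma eq_of_isPrefix_of_sum_apply_le (ht : IsPosPath t) (h : s <+: t) {c : Fin d}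
    (hc : t.sum c ≤ s.sum c) : s = t := by
  have := ht.sum_apply_add_length_le_of_isPrefix h c
  exact h.eq_of_length (by have := h.length_le; omega)

lemma eq_of_isPrefix_of_sum_eq (hd : 0 < d) (ht : IsPosPath t) (h : s <+: t)
    (hst : s.sum = t.sum) : s = t :=
  ht.eq_of_isPrefix_of_sum_apply_le h (c := ⟨0, hd⟩) (hst ▸ le_rfl)

lemma eq_of_sum_take_eq (hd : 0 < d) (hs : IsPosPath s) {i j : ℕ} (hi : i ≤ s.length)
    (hj : j ≤ s.length) (hij : (s.take i).sum = (s.take j).sum) : i = j := by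
  wlog h : i ≤ j generalizing i j
  · exact (this hj hi hij.symm (by omega)).symm
  have := (hs.sublist (List.take_sublist j s)).eq_of_isPrefix_of_sum_eq hd
    (List.take_prefix_take_left h) hij
  simpa [List.length_take, hi, hj] using congrArg List.length this

end IsPosPath

/-- `u` is a path from `0` and `v` a path from `n`, and they end at the same point. -/
def Meet (n : Fin d → ℤ) (u v : List (Fin d → ℤ)) : Prop :=
  IsPosPath u ∧ IsPosPath v ∧ v.sum = u.sum + n

/-- `s` from `0` and `t` from `n` end at their first common point. -/
def FirstMeet (n : Fin d → ℤ) (s t : List (Fin d → ℤ)) : Prop :=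
  Meet n s t ∧ ∀ i < s.length, ∀ j < t.length, (t.take j).sum ≠ (s.take i).sum + n

variable {n : Fin d → ℤ} {s t s' t' : List (Fin d → ℤ)}

lemma FirstMeet.eq_of_isPrefix (hd : 0 < d) (h : FirstMeet n s t) (h' : FirstMeet n s' t')
    (hs : s <+: s') (ht : t <+: t' ∨ t' <+: t) : s = s' ∧ t = t' := by
  obtain ⟨⟨hsp, htp, hst⟩, -⟩ := h
  obtain ⟨⟨hsp', htp', hst'⟩, hfirst'⟩ := h'
  rcases ht with ht | ht
  · by_cases hlen : s.length < s'.length ∧ t.length < t'.length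
    · refine (hfirst' _ hlen.1 _ hlen.2 ?_).elim
      rwa [← List.prefix_iff_eq_take.1 hs, ← List.prefix_iff_eq_take.1 ht]
    rcases not_and_or.1 hlen with hlen | hlen
    · obtain rfl := hs.eq_of_length (by have := hs.length_le; omega)
      exact ⟨rfl, htp'.eq_of_isPrefix_of_sum_eq hd ht (by rw [hst, hst'])⟩
    · obtain rfl := ht.eq_of_length (by have := ht.length_le; omega)
      refine ⟨hsp'.eq_of_isPrefix_of_sum_eq hd hs ?_, rfl⟩
      simpa using hst.symm.trans hst'
  · -- `s'` extends `s` and `t` extends `t'` by paths with the same sum, so both are empty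
    set c : Fin d := ⟨0, hd⟩
    have h1 := hsp'.sum_apply_add_length_le_of_isPrefix hs c
    have h2 := htp.sum_apply_add_length_le_of_isPrefix ht c
    have h3 := congrFun hst c
    have h4 := congrFun hst' c
    simp only [Pi.add_apply] at h3 h4
    have := hs.length_le
    have := ht.length_le
    exact ⟨hsp'.eq_of_isPrefix_of_sum_apply_le hs (c := c) (by omega),
      (htp.eq_of_isPrefix_of_sum_apply_le ht (c := c) (by omega)).symm⟩

lemma FirstMeet.eq_of_isPrefix_or_isPrefix (hd : 0 < d) (h : FirstMeet n s t)
    (h' : FirstMeet n s' t') (hs : s <+: s' ∨ s' <+: s) (ht : t <+: t' ∨ t' <+: t) :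
    s = s' ∧ t = t' := by
  rcases hs with hs | hs
  · exact h.eq_of_isPrefix hd h' hs ht
  · obtain ⟨rfl, rfl⟩ := h'.eq_of_isPrefix hd h hs ht.symm
    exact ⟨rfl, rfl⟩

lemma Meet.exists_firstMeet_append {u v : List (Fin d → ℤ)} (h : Meet n u v) :
    ∃ s r t r', u = s ++ r ∧ v = t ++ r' ∧ FirstMeet n s t ∧ Meet 0 r r' := by
  classical
  obtain ⟨hu, hv, huv⟩ := h
  have hex : ∃ i, i ≤ u.length ∧ ∃ j ≤ v.length, (v.take j).sum = (u.take i).sum + n :=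
    ⟨u.length, le_rfl, v.length, le_rfl, by simpa using huv⟩
  obtain ⟨hi, j, hj, hij⟩ := Nat.find_spec hex
  set i := Nat.find hex
  refine ⟨u.take i, u.drop i, v.take j, v.drop j, (List.take_append_drop i u).symm,
    (List.take_append_drop j v).symm, ⟨⟨hu.sublist (List.take_sublist i u),
      hv.sublist (List.take_sublist j v), hij⟩, ?_⟩, hu.sublist (List.drop_sublist i u),
      hv.sublist (List.drop_sublist j v), ?_⟩
  · intro i' hi' j' hj' heq
    simp only [List.length_take] at hi' hj'
    rw [List.take_take, List.take_take, min_eq_left (by omega), min_eq_left (by omega)] at heq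
    exact Nat.find_min hex (by omega) ⟨by omega, j', by omega, heq⟩
  · have hu' := List.sum_take_add_sum_drop u i
    have hv' := List.sum_take_add_sum_drop v j
    linear_combination hv' - hu' + huv - hij

noncomputable def pathWeight (w : (Fin d → ℤ) → ℝ≥0∞) (s : List (Fin d → ℤ)) : ℝ≥0∞ :=
  (s.map w).prod

lemma pathWeight_append (w : (Fin d → ℤ) → ℝ≥0∞) (s t : List (Fin d → ℤ)) :
    pathWeight w (s ++ t) = pathWeight w s * pathWeight w t := by
  simp [pathWeight]

/-- The total weight of the positive paths from `k` to `0`. -/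
noncomputable def pathSum (w : (Fin d → ℤ) → ℝ≥0∞) (k : Fin d → ℤ) : ℝ≥0∞ :=
  ∑' u : {u : List (Fin d → ℤ) // IsPosPath u ∧ u.sum = k}, pathWeight w u

noncomputable def pairSum (w : (Fin d → ℤ) → ℝ≥0∞)
    (R : List (Fin d → ℤ) → List (Fin d → ℤ) → Prop) : ℝ≥0∞ :=
  ∑' p : {p : List (Fin d → ℤ) × List (Fin d → ℤ) // R p.1 p.2},
    pathWeight w p.1.1 * pathWeight w p.1.2

lemma nonneg_of_pathSum_ne_zero {w : (Fin d → ℤ) → ℝ≥0∞} {k : Fin d → ℤ}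
    (hk : pathSum w k ≠ 0) : 0 ≤ k := by
  obtain ⟨⟨u, hu, rfl⟩, -⟩ := not_forall.1 (mt ENNReal.tsum_eq_zero.2 hk)
  exact fun c => (Int.natCast_nonneg _).trans (hu.length_le_sum_apply c)

lemma tsum_pathSum_mul_pathSum_add (w : (Fin d → ℤ) → ℝ≥0∞) (n : Fin d → ℤ) :
    ∑' k, pathSum w k * pathSum w (k + n) = pairSum w (Meet n) := by
  let e : (Σ k : Fin d → ℤ, {u : List (Fin d → ℤ) // IsPosPath u ∧ u.sum = k} ×
      {v : List (Fin d → ℤ) // IsPosPath v ∧ v.sum = k + n}) ≃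
      {p : List (Fin d → ℤ) × List (Fin d → ℤ) // Meet n p.1 p.2} :=
    { toFun := fun x => ⟨(x.2.1, x.2.2), x.2.1.2.1, x.2.2.2.1, by rw [x.2.2.2.2, x.2.1.2.2]⟩
      invFun := fun p => ⟨p.1.1.sum, ⟨p.1.1, p.2.1, rfl⟩, ⟨p.1.2, p.2.2.1, p.2.2.2⟩⟩
      left_inv := by rintro ⟨k, ⟨u, hu, rfl⟩, v⟩; rfl
      right_inv := fun p => rfl }
  simp only [pathSum, ENNReal.tsum_mul_tsum]
  rw [pairSum, ← e.tsum_eq, ENNReal.tsum_sigma']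
  rfl

lemma FirstMeet.meet_append (h : FirstMeet n s t) {r r' : List (Fin d → ℤ)}
    (h' : Meet 0 r r') :
    Meet n (s ++ r) (t ++ r') := by
  obtain ⟨⟨hs, ht, hst⟩, -⟩ := h
  obtain ⟨hr, hr', hrr'⟩ := h'
  refine ⟨hs.append hr, ht.append hr', ?_⟩
  simp only [List.sum_append]
  linear_combination hst + hrr'

lemma pairSum_meet (hd : 0 < d) (w : (Fin d → ℤ) → ℝ≥0∞) (n : Fin d → ℤ) :
    pairSum w (Meet n) = pairSum w (FirstMeet n) * pairSum w (Meet 0) := by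
  let glue : {p : List (Fin d → ℤ) × List (Fin d → ℤ) // FirstMeet n p.1 p.2} ×
      {p : List (Fin d → ℤ) × List (Fin d → ℤ) // Meet 0 p.1 p.2} →
      {p : List (Fin d → ℤ) × List (Fin d → ℤ) // Meet n p.1 p.2} :=
    fun x => ⟨(x.1.1.1 ++ x.2.1.1, x.1.1.2 ++ x.2.1.2), x.1.2.meet_append x.2.2⟩
  have hglue : Bijective glue := by
    refine ⟨?_, fun ⟨⟨u, v⟩, h⟩ => ?_⟩
    · rintro ⟨⟨⟨s, t⟩, hst⟩, ⟨⟨r, r'⟩, _⟩⟩ ⟨⟨⟨s', t'⟩, hst'⟩, ⟨⟨p, p'⟩, _⟩⟩ he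
      simp only [glue, Subtype.mk.injEq, Prod.mk.injEq] at he
      obtain ⟨hu, hv⟩ := he
      obtain ⟨rfl, rfl⟩ := hst.eq_of_isPrefix_or_isPrefix hd hst'
        (List.prefix_or_prefix_of_prefix (List.prefix_append s r) (hu ▸ List.prefix_append s' p))
        (List.prefix_or_prefix_of_prefix (List.prefix_append t r') (hv ▸ List.prefix_append t' p'))
      obtain rfl := List.append_cancel_left hu
      obtain rfl := List.append_cancel_left hv
      rfl
    · obtain ⟨s, r, t, r', rfl, rfl, hst, hrr'⟩ := h.exists_firstMeet_append
      exact ⟨(⟨(s, t), hst⟩, ⟨(r, r'), hrr'⟩), rfl⟩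
  rw [pairSum, pairSum, pairSum, ENNReal.tsum_mul_tsum,
    ← (Equiv.ofBijective glue hglue).tsum_eq]
  refine tsum_congr fun x => ?_
  simp only [Equiv.ofBijective_apply, glue, pathWeight_append]
  ring

section AncestralLine

variable {Ω : Type*}

def parent (Z : (Fin d → ℤ) → Ω → (Fin d → ℤ)) (ω : Ω) (i : Fin d → ℤ) : Fin d → ℤ := i - Z i ω

def ancestralLine (Z : (Fin d → ℤ) → Ω → (Fin d → ℤ)) (ω : Ω) (a : Fin d → ℤ) :
    Set (Fin d → ℤ) :=
  {j | ∃ m : ℕ, (parent Z ω)^[m] a = j}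

def ancestralSteps (Z : (Fin d → ℤ) → Ω → (Fin d → ℤ)) (ω : Ω) (a : Fin d → ℤ) (m : ℕ) :
    List (Fin d → ℤ) :=
  List.ofFn fun i : Fin m => Z ((parent Z ω)^[i] a) ω

/-- The ancestral line of `a` starts with the steps `s`. -/
def FollowsPath (Z : (Fin d → ℤ) → Ω → (Fin d → ℤ)) (a : Fin d → ℤ) (s : List (Fin d → ℤ)) :
    Set Ω :=
  {ω | ∀ i : Fin s.length, Z (a - (s.take i).sum) ω = s[i]}

variable {Z : (Fin d → ℤ) → Ω → (Fin d → ℤ)} {ω : Ω} {a : Fin d → ℤ} {s t : List (Fin d → ℤ)}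

/-- The hypothesis holds both when `s` is read off the ancestral line of `a` and when
`ω ∈ FollowsPath Z a s`. -/
lemma parent_iterate_eq_sub_sum_take
    (h : ∀ i (hi : i < s.length), (parent Z ω)^[i] a = a - (s.take i).sum →
      Z ((parent Z ω)^[i] a) ω = s[i]) {i : ℕ} (hi : i ≤ s.length) :
    (parent Z ω)^[i] a = a - (s.take i).sum := by
  induction i with
  | zero => simp
  | succ i ih =>
    have ih := ih (by omega)
    rw [Function.iterate_succ_apply', List.sum_take_succ _ _ (by omega), parent,
      h i (by omega) ih, ih, sub_sub]

lemma mem_followsPath_iff : ω ∈ FollowsPath Z a s ↔ ancestralSteps Z ω a s.length = s := by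
  constructor
  · intro h
    have hiter := fun i (hi : i ≤ s.length) =>
      parent_iterate_eq_sub_sum_take (fun i hi e => e ▸ h ⟨i, hi⟩) hi
    exact List.ext_getElem (by simp [ancestralSteps]) fun i _ hi => by
      simp only [ancestralSteps, List.getElem_ofFn, hiter i hi.le]
      exact h ⟨i, hi⟩
  · intro h i
    have hZ : ∀ i (hi : i < s.length), Z ((parent Z ω)^[i] a) ω = s[i] := fun i hi => by
      simpa [ancestralSteps] using List.getElem_of_eq h (by simpa [ancestralSteps] using hi)
    rw [← parent_iterate_eq_sub_sum_take (fun i hi _ => hZ i hi) i.2.le]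
    exact hZ i i.2

lemma ancestralSteps_mem_followsPath (m : ℕ) :
    ω ∈ FollowsPath Z a (ancestralSteps Z ω a m) :=
  mem_followsPath_iff.2 (by simp [ancestralSteps])

lemma mem_followsPath_of_isPrefix {m : ℕ} (h : s <+: ancestralSteps Z ω a m) :
    ω ∈ FollowsPath Z a s :=
  mem_followsPath_iff.2 <| List.ext_getElem (by simp [ancestralSteps]) fun i _ hi => by
    simp [h.getElem hi, ancestralSteps]

lemma isPrefix_or_isPrefix_of_mem_followsPath {s' : List (Fin d → ℤ)}
    (h : ω ∈ FollowsPath Z a s) (h' : ω ∈ FollowsPath Z a s') : s <+: s' ∨ s' <+: s := by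
  have hprefix : ∀ {m m'}, m ≤ m' → ancestralSteps Z ω a m <+: ancestralSteps Z ω a m' :=
    fun hm => List.prefix_iff_eq_take.2 <| List.ext_getElem (by simp [ancestralSteps]; omega)
      fun i _ hi => by simp [ancestralSteps]
  rw [← mem_followsPath_iff.1 h, ← mem_followsPath_iff.1 h']
  exact (le_total _ _).imp hprefix hprefix

lemma parent_iterate_length_of_mem_followsPath (h : ω ∈ FollowsPath Z a s) :
    (parent Z ω)^[s.length] a = a - s.sum := by
  rw [parent_iterate_eq_sub_sum_take (fun i hi e => e ▸ h ⟨i, hi⟩) le_rfl, List.take_length]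

lemma sum_ancestralSteps (m : ℕ) : (ancestralSteps Z ω a m).sum = a - (parent Z ω)^[m] a := by
  have := parent_iterate_length_of_mem_followsPath
    (ancestralSteps_mem_followsPath (Z := Z) (ω := ω) (a := a) m)
  simp only [ancestralSteps, List.length_ofFn] at this ⊢
  rw [this, sub_sub_cancel]

lemma isPosPath_ancestralSteps (hω : ∀ v c, 1 ≤ Z v ω c) (m : ℕ) :
    IsPosPath (ancestralSteps Z ω a m) := by
  intro z hz
  obtain ⟨i, rfl⟩ := List.mem_ofFn.1 hz
  exact hω _

end AncestralLine

section Measure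

variable {Ω : Type*} [MeasurableSpace Ω] {P : Measure Ω} {μ : Measure (Fin d → ℤ)}
  {Z : (Fin d → ℤ) → Ω → (Fin d → ℤ)}

lemma measurableSet_followsPath (hZmeas : ∀ i, Measurable (Z i)) (a : Fin d → ℤ)
    (s : List (Fin d → ℤ)) : MeasurableSet (FollowsPath Z a s) := by
  simp only [FollowsPath, Set.ofPred_forall]
  exact .iInter fun i => hZmeas _ (measurableSet_singleton _)

lemma ae_forall_one_le (hZmeas : ∀ i, Measurable (Z i)) (hZlaw : ∀ i, P.map (Z i) = μ)
    (hsupp : ∀ k : Fin d → ℤ, (¬ ∀ i, 1 ≤ k i) → μ {k} = 0) :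
    ∀ᵐ ω ∂P, ∀ v c, 1 ≤ Z v ω c := by
  refine ae_all_iff.2 fun v =>
    ae_of_ae_map (p := fun z => ∀ c, 1 ≤ z c) (hZmeas v).aemeasurable ?_
  rw [hZlaw v]
  exact ae_iff_of_countable.2 fun k hk => by_contra fun h => hk (hsupp k h)

section Independent

variable (hZmeas : ∀ i, Measurable (Z i)) (hZlaw : ∀ i, P.map (Z i) = μ) (hZindep : iIndepFun Z P)
include hZmeas hZlaw hZindep

lemma measure_forall_eq_of_injective {ι : Type*} [Fintype ι] {p : ι → Fin d → ℤ}
    (hp : Injective p) (z : ι → Fin d → ℤ) :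
    P {ω | ∀ j, Z (p j) ω = z j} = ∏ j, μ {z j} := by
  have := (hZindep.precomp hp).measure_inter_preimage_eq_mul Finset.univ
    (sets := fun j => {z j}) fun _ _ => measurableSet_singleton _
  simp only [Finset.mem_univ, Set.iInter_true] at this
  convert this using 2
  · ext ω
    simp
  · rw [← hZlaw, Measure.map_apply (hZmeas _) (measurableSet_singleton _)]

lemma measure_followsPath_inter (hd : 0 < d) {a b : Fin d → ℤ} {s t : List (Fin d → ℤ)}
    (hs : IsPosPath s) (ht : IsPosPath t)
    (hdisj : ∀ i < s.length, ∀ j < t.length, a - (s.take i).sum ≠ b - (t.take j).sum) :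
    P (FollowsPath Z a s ∩ FollowsPath Z b t) =
      pathWeight (fun z => μ {z}) s * pathWeight (fun z => μ {z}) t := by
  let p : Fin s.length ⊕ Fin t.length → Fin d → ℤ :=
    Sum.elim (fun i => a - (s.take i).sum) (fun j => b - (t.take j).sum)
  have hp : Injective p := by
    rintro (i | i) (j | j) h <;>
      simp only [p, Sum.elim_inl, Sum.elim_inr, sub_right_inj, Sum.inl.injEq, Sum.inr.injEq,
        reduceCtorEq] at h ⊢
    · exact Fin.ext (hs.eq_of_sum_take_eq hd i.2.le j.2.le h)
    · exact hdisj i i.2 j j.2 h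
    · exact hdisj j j.2 i i.2 h.symm
    · exact Fin.ext (ht.eq_of_sum_take_eq hd i.2.le j.2.le h)
  have hset : FollowsPath Z a s ∩ FollowsPath Z b t = {ω | ∀ j, Z (p j) ω =
      Sum.elim (fun i : Fin s.length => s[i]) (fun j : Fin t.length => t[j]) j} := by
    ext ω
    simp [FollowsPath, p, Sum.forall]
  rw [hset, measure_forall_eq_of_injective hZmeas hZlaw hZindep hp, Fintype.prod_sum_type]
  exact congr_arg₂ _ (Fin.prod_univ_fun_getElem s fun z => μ {z})
    (Fin.prod_univ_fun_getElem t fun z => μ {z})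

lemma measure_followsPath (hd : 0 < d) (a : Fin d → ℤ) {s : List (Fin d → ℤ)}
    (hs : IsPosPath s) : P (FollowsPath Z a s) = pathWeight (fun z => μ {z}) s := by
  simpa [FollowsPath, pathWeight] using
    measure_followsPath_inter hZmeas hZlaw hZindep hd (b := a) (t := []) hs (by simp [IsPosPath])
      (by simp)

variable (hd : 0 < d) (hpos : ∀ᵐ ω ∂P, ∀ v c, 1 ≤ Z v ω c)
include hd hpos

lemma measure_zero_mem_ancestralLine (k : Fin d → ℤ) :
    P {ω | 0 ∈ ancestralLine Z ω k} = pathSum (fun z => μ {z}) k := by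
  rw [pathSum, measure_eq_tsum_of_ae_subset_iUnion
    (F := fun u : {u : List (Fin d → ℤ) // IsPosPath u ∧ u.sum = k} => FollowsPath Z k u)
    (fun _ => measurableSet_followsPath hZmeas _ _)]
  · exact tsum_congr fun u => measure_followsPath hZmeas hZlaw hZindep hd k u.2.1
  · intro u u' hne
    refine Set.disjoint_left.2 fun ω h h' => hne (Subtype.ext ?_)
    rcases isPrefix_or_isPrefix_of_mem_followsPath h h' with hu | hu
    · exact u'.2.1.eq_of_isPrefix_of_sum_eq hd hu (u.2.2.trans u'.2.2.symm)
    · exact (u.2.1.eq_of_isPrefix_of_sum_eq hd hu (u'.2.2.trans u.2.2.symm)).symm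
  · intro u ω h
    exact ⟨u.1.length, by rw [parent_iterate_length_of_mem_followsPath h, u.2.2, sub_self]⟩
  · filter_upwards [hpos] with ω hω ⟨m, hm⟩
    exact ⟨⟨ancestralSteps Z ω k m, isPosPath_ancestralSteps hω m,
      by rw [sum_ancestralSteps, hm, sub_zero]⟩, ancestralSteps_mem_followsPath m⟩

lemma measure_ancestralLines_meet (n : Fin d → ℤ) :
    P {ω | (ancestralLine Z ω 0 ∩ ancestralLine Z ω n).Nonempty} =
      pairSum (fun z => μ {z}) (FirstMeet n) := by
  rw [pairSum, measure_eq_tsum_of_ae_subset_iUnion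
    (F := fun p : {p : List (Fin d → ℤ) × List (Fin d → ℤ) // FirstMeet n p.1 p.2} =>
      FollowsPath Z 0 p.1.1 ∩ FollowsPath Z n p.1.2)
    (fun _ => (measurableSet_followsPath hZmeas _ _).inter (measurableSet_followsPath hZmeas _ _))]
  · refine tsum_congr fun p => measure_followsPath_inter hZmeas hZlaw hZindep hd p.2.1.1
      p.2.1.2.1 fun i hi j hj h => p.2.2 i hi j hj ?_
    linear_combination h
  · intro p p' hne
    refine Set.disjoint_left.2 fun ω h h' => hne (Subtype.ext ?_)
    obtain ⟨hs, ht⟩ := p.2.eq_of_isPrefix_or_isPrefix hd p'.2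
      (isPrefix_or_isPrefix_of_mem_followsPath h.1 h'.1)
      (isPrefix_or_isPrefix_of_mem_followsPath h.2 h'.2)
    exact Prod.ext hs ht
  · intro p ω h
    refine ⟨0 - p.1.1.sum, ⟨_, parent_iterate_length_of_mem_followsPath h.1⟩, _,
      (parent_iterate_length_of_mem_followsPath h.2).trans ?_⟩
    linear_combination -p.2.1.2.2
  · filter_upwards [hpos] with ω hω ⟨x, ⟨a, ha⟩, ⟨b, hb⟩⟩
    have hc : Meet n (ancestralSteps Z ω 0 a) (ancestralSteps Z ω n b) :=
      ⟨isPosPath_ancestralSteps hω a, isPosPath_ancestralSteps hω b, by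
        rw [sum_ancestralSteps, sum_ancestralSteps, ha, hb]; ring⟩
    obtain ⟨s, r, t, r', hu, hv, hst, -⟩ := hc.exists_firstMeet_append
    exact ⟨⟨(s, t), hst⟩, mem_followsPath_of_isPrefix (hu ▸ List.prefix_append s r),
      mem_followsPath_of_isPrefix (hv ▸ List.prefix_append t r')⟩

end Independent

end Measure

end AncestralLines

open AncestralLines

theorem ancestral_lines_intersection_probability_general
    {d : ℕ} {Ω : Type*} [MeasurableSpace Ω]
    (P : Measure Ω) [IsProbabilityMeasure P]
    (μ : Measure (Fin d → ℤ))
    (hsupp : ∀ k : Fin d → ℤ, (¬ ∀ i, 1 ≤ k i) → μ {k} = 0)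
    (Z : (Fin d → ℤ) → Ω → (Fin d → ℤ))
    (hZmeas : ∀ i, Measurable (Z i))
    (hZlaw : ∀ i, Measure.map (Z i) P = μ)
    (hZindep : iIndepFun Z P)
    (A : (Fin d → ℤ) → Ω → Set (Fin d → ℤ))
    (hA : ∀ n ω, A n ω = {j | ∃ m : ℕ, (fun i => i - Z i ω)^[m] n = j})
    (q : (Fin d → ℤ) → ℝ)
    (hq : ∀ k, q k = (P {ω | (0 : Fin d → ℤ) ∈ A k ω}).toReal)
    (hsum : Summable (fun k : Fin d → ℕ => q (fun i => (k i : ℤ)) ^ 2)) :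
    ∀ n : Fin d → ℤ,
      Summable (fun k : Fin d → ℤ => q k * q (k + n)) ∧
      (P {ω | (A 0 ω ∩ A n ω).Nonempty}).toReal *
          (∑' k : Fin d → ℕ, q (fun i => (k i : ℤ)) ^ 2)
        = ∑' k : Fin d → ℤ, q k * q (k + n) := by
  intro n
  obtain rfl : A = fun n ω => ancestralLine Z ω n := funext₂ hA
  simp only [hq] at hsum ⊢
  rcases Nat.eq_zero_or_pos d with rfl | hd
  · have hall : ∀ (k j : Fin 0 → ℤ) ω, j ∈ ancestralLine Z ω k :=
      fun _ _ _ => ⟨0, Subsingleton.elim _ _⟩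
    refine ⟨.of_finite, ?_⟩
    simp [hall, Set.Nonempty]
  set Q : (Fin d → ℤ) → ℝ≥0∞ := fun k => P {ω | 0 ∈ ancestralLine Z ω k}
  have hpos := ae_forall_one_le hZmeas hZlaw hsupp
  have hQ : ∀ k, Q k = pathSum (fun z => μ {z}) k :=
    measure_zero_mem_ancestralLine hZmeas hZlaw hZindep hd hpos
  have hsq := tsum_pathSum_mul_pathSum_add (fun z => μ {z}) 0
  simp only [add_zero] at hsq
  have key : P {ω | (ancestralLine Z ω 0 ∩ ancestralLine Z ω n).Nonempty} *
      ∑' k : Fin d → ℕ, Q (fun i => (k i : ℤ)) ^ 2 = ∑' k, Q k * Q (k + n) := by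
    rw [tsum_natCast_eq_tsum (f := fun k => Q k ^ 2) fun k hk =>
      nonneg_of_pathSum_ne_zero (hQ k ▸ ne_zero_pow two_ne_zero hk)]
    simp only [hQ, sq]
    rw [hsq, tsum_pathSum_mul_pathSum_add, pairSum_meet hd _ n,
      measure_ancestralLines_meet hZmeas hZlaw hZindep hd hpos]
  simpa only [ENNReal.toReal_mul, ENNReal.toReal_pow] using ENNReal.toReal_mul_tsum_eq
    (measure_ne_top P _) (fun k => ENNReal.pow_ne_top (measure_ne_top P _)) (by simpa using hsum)
    key

/-- For the random graph on `ℤ^d` built from i.i.d. jumps with law `μ`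
supported in `{1,2,…}^d`, with ancestral lines `A_n` (forward orbits of `i ↦ i − Z_i`)
and `q_k = P(0 ∈ A_k)`: if `Σ_{k∈ℕ^d} q_k² < ∞` then for every `n ∈ ℤ^d` the series
`Σ_{k∈ℤ^d} q_k q_{k+n}` converges and
`P(A_0 ∩ A_n ≠ ∅) · Σ_{k∈ℕ^d} q_k² = Σ_{k∈ℤ^d} q_k q_{k+n}`. -/
theorem ancestral_lines_intersection_probability
    {d : ℕ} {Ω : Type*} [MeasurableSpace Ω]
    (P : Measure Ω) [IsProbabilityMeasure P]
    (μ : Measure (Fin d → ℤ)) [IsProbabilityMeasure μ]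
    (hsupp : ∀ k : Fin d → ℤ, (¬ ∀ i, 1 ≤ k i) → μ {k} = 0)
    (Z : (Fin d → ℤ) → Ω → (Fin d → ℤ))
    (hZmeas : ∀ i, Measurable (Z i))
    (hZlaw : ∀ i, Measure.map (Z i) P = μ)
    (hZindep : iIndepFun Z P)
    (A : (Fin d → ℤ) → Ω → Set (Fin d → ℤ))
    (hA : ∀ n ω, A n ω = {j | ∃ m : ℕ, (fun i => i - Z i ω)^[m] n = j})
    (q : (Fin d → ℤ) → ℝ)
    (hq : ∀ k, q k = (P {ω | (0 : Fin d → ℤ) ∈ A k ω}).toReal)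
    (hsum : Summable (fun k : Fin d → ℕ => q (fun i => (k i : ℤ)) ^ 2)) :
    ∀ n : Fin d → ℤ,
      Summable (fun k : Fin d → ℤ => q k * q (k + n)) ∧
      (P {ω | (A 0 ω ∩ A n ω).Nonempty}).toReal *
          (∑' k : Fin d → ℕ, q (fun i => (k i : ℤ)) ^ 2)
        = ∑' k : Fin d → ℤ, q k * q (k + n) :=
  ancestral_lines_intersection_probability_general P μ hsupp Z hZmeas hZlaw hZindep A hA q hq hsum
end

section
/- Let μ be a probability measure on ℤ^d whose support is contained in {1,2,…}^d. Let (Z_i)_{i∈ℤ^d} and (Z'_i)_{i∈ℤ^d} be two independent i.i.d. families with common law μ, define f(i) = i − Z_i, f'(i) = i − Z'_i, and let A = {f^{∘m}(0) : m ∈ ℕ}, A' = {f'^{∘m}(0) : m ∈ ℕ} be the ancestral lines of 0 in the two families; set q_k = P(0 ∈ {f^{∘m}(k) : m ∈ ℕ}). Then: (1) E[#(A ∩ A')] = Σ_{k∈ℕ^d} q_k² (as an identity in [0,∞]); (2) for every integer k ≥ 0, P(#(A ∩ A') > k) = P(A ∩ A' ≠ {0})^k; and consequently (3) E[#(A ∩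 A')] = (1 − P(A ∩ A' ≠ {0}))^{-1} in [0,∞]. -/
/-!
Along each ancestral line the weight `w v = ∑ i, v i` decreases strictly, so the common ancestors
of `0` are ordered by weight. Whether `x ≠ 0` is the first of them is decided by the jumps at
sites of weight `> w x`; the common ancestors below `x` are those of `x`, which depend only on the
jumps at sites of weight `≤ w x` and, by translation invariance, are distributed as those of `0`.
Hence `P(#(A ∩ A') > k + 1) = P(A ∩ A' ≠ {0}) · P(#(A ∩ A') > k)`, which is (2), and summing the
geometric series gives (3). Identity (1) is `E[#(A ∩ A')] = ∑_y P(y ∈ A) P(y ∈ A')`, where the two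
factors agree and `P(-k ∈ A) = q_k` by translation.
-/

open MeasureTheory ProbabilityTheory
open scoped ENNReal

open Set Function

lemma encard_eq_tsum_indicator {β : Type*} (s : Set β) :
    (s.encard : ℝ≥0∞) = ∑' y, s.indicator 1 y := by
  rw [← ENNReal.tsum_set_one, tsum_subtype s fun _ => (1 : ℝ≥0∞)]
  rfl

lemma measurable_encard_of_measurableSet_mem {α β : Type*} [MeasurableSpace α] [Countable β]
    {S : α → Set β} (hS : ∀ y, MeasurableSet {a | y ∈ S a}) :
    Measurable fun a => ((S a).encard : ℝ≥0∞) := by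
  simp_rw [encard_eq_tsum_indicator]
  exact .tsum fun y => measurable_one.indicator (hS y)

lemma lintegral_encard_eq_tsum {α β : Type*} [MeasurableSpace α] [Countable β] (ν : Measure α)
    {S : α → Set β} (hS : ∀ y, MeasurableSet {a | y ∈ S a}) :
    ∫⁻ a, ((S a).encard : ℝ≥0∞) ∂ν = ∑' y, ν {a | y ∈ S a} := by
  simp_rw [encard_eq_tsum_indicator]
  change ∫⁻ a, ∑' y, {a | y ∈ S a}.indicator 1 a ∂ν = _
  rw [lintegral_tsum fun y => (measurable_one.indicator (hS y)).aemeasurable]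
  exact tsum_congr fun y => lintegral_indicator_one (hS y)

lemma encard_setOf_natCast_lt (c : ℕ∞) : {k : ℕ | (k : ℕ∞) < c}.encard = c := by
  induction c using ENat.recTopCoe with
  | top => simp [encard_univ, ENat.card_eq_top_of_infinite]
  | coe n =>
    have : {k : ℕ | (k : ℕ∞) < n} = ↑(Finset.range n) := by ext; simp
    rw [this, encard_coe_eq_coe_finsetCard, Finset.card_range]

lemma lintegral_toENNReal_eq_tsum_measure_lt {α : Type*} [MeasurableSpace α] (ν : Measure α)
    {N : α → ℕ∞} (hN : ∀ k : ℕ, MeasurableSet {a | (k : ℕ∞) < N a}) :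
    ∫⁻ a, (N a : ℝ≥0∞) ∂ν = ∑' k : ℕ, ν {a | (k : ℕ∞) < N a} := by
  calc ∫⁻ a, (N a : ℝ≥0∞) ∂ν = ∫⁻ a, ({k : ℕ | (k : ℕ∞) < N a}.encard : ℝ≥0∞) ∂ν := by
        simp only [encard_setOf_natCast_lt]
    _ = ∑' k : ℕ, ν {a | (k : ℕ∞) < N a} := lintegral_encard_eq_tsum ν hN

lemma measure_eq_tsum_of_ae {α ι : Type*} [MeasurableSpace α] [Countable ι] {ν : Measure α}
    {p : α → Prop} (hp : ∀ᵐ a ∂ν, p a) {s : Set α} {t : ι → Set α}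
    (ht : ∀ i, MeasurableSet (t i)) (hst : ∀ a, p a → (a ∈ s ↔ ∃ i, a ∈ t i))
    (hunique : ∀ a, p a → ∀ i j, a ∈ t i → a ∈ t j → i = j) :
    ν s = ∑' i, ν (t i) := by
  have hnull : ν {a | ¬ p a} = 0 := ae_iff.mp hp
  calc ν s = ν (⋃ i, t i) := measure_congr <| Filter.eventuallyEq_set.mpr <| by
        filter_upwards [hp] with a ha
        simpa using hst a ha
    _ = ∑' i, ν (t i) := measure_iUnion₀
        (fun i j hij => measure_mono_null (fun a ha hpa => hij (hunique a hpa i j ha.1 ha.2)) hnull)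
        fun i => (ht i).nullMeasurableSet

lemma indep_cylinderEvents_infinitePi {ι : Type*} {X : ι → Type*} [∀ i, MeasurableSpace (X i)]
    (ν : ∀ i, Measure (X i)) [∀ i, IsProbabilityMeasure (ν i)] {S T : Set ι} (hST : Disjoint S T) :
    Indep (cylinderEvents S) (cylinderEvents T) (Measure.infinitePi ν) := by
  have h : iIndepFun (fun i (g : ∀ i, X i) => g i) (Measure.infinitePi ν) := by
    rw [iIndepFun_iff_map_fun_eq_infinitePi_map (by fun_prop), Measure.map_id']
    simp_rw [Measure.infinitePi_map_eval]
  exact indep_iSup_of_disjoint (fun i => (measurable_pi_apply i).comap_le) h hST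

section ConstantProduct

variable {ι Y : Type*} [MeasurableSpace Y] (μ : Measure Y) [IsProbabilityMeasure μ]

lemma measurePreserving_comp_equiv_infinitePi (e : ι ≃ ι) :
    MeasurePreserving (fun g : ι → Y => g ∘ e)
      (Measure.infinitePi fun _ => μ) (Measure.infinitePi fun _ => μ) := by
  refine ⟨by fun_prop, ?_⟩
  convert Measure.infinitePi_map_piCongrLeft (fun _ : ι => μ) e.symm using 2
  ext g i
  simp [MeasurableEquiv.coe_piCongrLeft, Equiv.piCongrLeft_apply]

lemma measurable_indicator_cylinderEvents {ι : Type*} [Zero Y] (T : Set ι) :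
    Measurable[cylinderEvents T] fun g : ι → Y => T.indicator g := by
  rw [@measurable_pi_iff]
  intro i
  by_cases hi : i ∈ T
  · simpa only [indicator_of_mem hi] using measurable_cylinderEvent_apply hi
  · simpa only [indicator_of_notMem hi] using @measurable_const _ _ _ (cylinderEvents T) _

lemma measurable_curry_cylinderEvents {α β : Type*} (a : α) :
    Measurable[cylinderEvents (Prod.fst ⁻¹' {a})] fun g : α × β → Y => curry g a := by
  rw [@measurable_pi_iff]
  exact fun i => measurable_cylinderEvent_apply (X := fun _ : α × β => Y) rfl

lemma ae_forall_infinitePi [Countable ι] {p : Y → Prop} (h : ∀ᵐ y ∂μ, p y) :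
    ∀ᵐ g ∂(Measure.infinitePi fun _ : ι => μ), ∀ i, p (g i) :=
  ae_all_iff.mpr fun i => (measurePreserving_eval_infinitePi _ i).quasiMeasurePreserving.ae h

end ConstantProduct

namespace AncestralLine

variable {V : Type*} [AddCommGroup V]

def ancestralLine (z : V → V) (n : V) : Set V :=
  range fun m : ℕ => (fun i => i - z i)^[m] n

variable {z : V → V} {n x y : V}

lemma mem_ancestralLine_self : n ∈ ancestralLine z n := ⟨0, rfl⟩

lemma sub_mem_ancestralLine (hx : x ∈ ancestralLine z n) : x - z x ∈ ancestralLine z n := by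
  obtain ⟨m, rfl⟩ := hx
  exact ⟨m + 1, iterate_succ_apply' _ _ _⟩

lemma ancestralLine_subset (hx : x ∈ ancestralLine z n) :
    ancestralLine z x ⊆ ancestralLine z n := by
  obtain ⟨m, rfl⟩ := hx
  rintro _ ⟨k, rfl⟩
  exact ⟨k + m, iterate_add_apply _ _ _ _⟩

lemma ancestralLine_add (z : V → V) (n x : V) :
    ancestralLine z (n + x) = (· + x) '' ancestralLine (fun i => z (i + x)) n := by
  have h : Semiconj (· + x) (fun i => i - z (i + x)) (fun i => i - z i) := fun i => by
    simp only; abel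
  simp only [ancestralLine, ← range_comp, comp_def, (h.iterate_right _ n).symm]

lemma add_mem_ancestralLine_add_iff :
    y + x ∈ ancestralLine z (n + x) ↔ y ∈ ancestralLine (fun i => z (i + x)) n := by
  rw [ancestralLine_add, (add_left_injective x).mem_set_image]

-- Replacing the jumps outside `C` by `0` stops a line where it leaves `C`, so the truncated line
-- only depends on the jumps over `C`.
lemma iterate_indicator_eq {C : Set V} {m : ℕ}
    (hC : ∀ k < m, (fun i => i - z i)^[k] n ∈ C) :
    (fun i => i - C.indicator z i)^[m] n = (fun i => i - z i)^[m] n := by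
  induction m with
  | zero => rfl
  | succ m ih =>
    rw [iterate_succ_apply', iterate_succ_apply', ih fun k hk => hC k (hk.trans m.lt_succ_self),
      indicator_of_mem (hC m m.lt_succ_self)]

lemma ancestralLine_indicator_subset (C : Set V) :
    ancestralLine (C.indicator z) n ⊆ ancestralLine z n := by
  rintro _ ⟨m, rfl⟩
  induction m with
  | zero => exact mem_ancestralLine_self
  | succ m ih =>
    dsimp only at ih ⊢
    rw [iterate_succ_apply']
    by_cases hC : (fun i => i - C.indicator z i)^[m] n ∈ C
    · rw [indicator_of_mem hC]
      exact sub_mem_ancestralLine ih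
    · rwa [indicator_of_notMem hC, sub_zero]

lemma le_of_mem_ancestralLine [PartialOrder V] [IsOrderedAddMonoid V] (hz : ∀ i, 0 ≤ z i)
    (hx : x ∈ ancestralLine z n) : x ≤ n := by
  obtain ⟨m, rfl⟩ := hx
  induction m with
  | zero => exact le_rfl
  | succ m ih => exact (iterate_succ_apply' _ _ _).trans_le ((sub_le_self _ (hz _)).trans ih)

section Weight

variable (w : V →+ ℤ) (hz : ∀ i, 0 < w (z i))
include hz

lemma strictAnti_weight_iterate : StrictAnti fun m => w ((fun i => i - z i)^[m] n) := by
  refine strictAnti_nat_of_succ_lt fun m => ?_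
  rw [iterate_succ_apply', map_sub]
  linarith [hz ((fun i => i - z i)^[m] n)]

lemma weight_lt_of_mem_ancestralLine (hx : x ∈ ancestralLine z n) (hxn : x ≠ n) : w x < w n := by
  obtain ⟨m, rfl⟩ := hx
  obtain _ | m := m
  · exact absurd rfl hxn
  · exact strictAnti_weight_iterate w hz m.succ_pos

lemma weight_le_of_mem_ancestralLine (hx : x ∈ ancestralLine z n) : w x ≤ w n := by
  obtain rfl | hxn := eq_or_ne x n
  · exact le_rfl
  · exact (weight_lt_of_mem_ancestralLine w hz hx hxn).le

lemma mem_ancestralLine_of_weight_le (hx : x ∈ ancestralLine z n) (hy : y ∈ ancestralLine z n)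
    (hxy : w y ≤ w x) : y ∈ ancestralLine z x := by
  obtain ⟨k, rfl⟩ := hx
  obtain ⟨m, rfl⟩ := hy
  have hkm : k ≤ m := (strictAnti_weight_iterate w hz).le_iff_ge.mp hxy
  exact ⟨m - k, by dsimp only; rw [← iterate_add_apply, Nat.sub_add_cancel hkm]⟩

lemma eq_of_weight_eq (hx : x ∈ ancestralLine z n) (hy : y ∈ ancestralLine z n)
    (hxy : w x = w y) : x = y := by
  by_contra hne
  have := weight_lt_of_mem_ancestralLine w hz
    (mem_ancestralLine_of_weight_le w hz hx hy hxy.ge) (Ne.symm hne)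
  omega

lemma mem_ancestralLine_indicator_of_le {t : ℤ} (hy : y ∈ ancestralLine z n) (hty : t ≤ w y) :
    y ∈ ancestralLine ({i | t < w i}.indicator z) n := by
  obtain ⟨m, rfl⟩ := hy
  exact ⟨m, iterate_indicator_eq fun k hk =>
    hty.trans_lt (strictAnti_weight_iterate w hz hk)⟩

lemma ancestralLine_indicator_of_weight_le {t : ℤ} (hnt : w n ≤ t) :
    ancestralLine ({i | w i ≤ t}.indicator z) n = ancestralLine z n := by
  refine congrArg range (funext fun m => iterate_indicator_eq fun k _ => ?_)
  exact (weight_le_of_mem_ancestralLine w hz ⟨k, rfl⟩).trans hnt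

end Weight

def commonAncestors (g : Bool × V → V) (n : V) : Set V :=
  ancestralLine (curry g false) n ∩ ancestralLine (curry g true) n

lemma zero_mem_commonAncestors (g : Bool × V → V) : (0 : V) ∈ commonAncestors g 0 :=
  ⟨mem_ancestralLine_self, mem_ancestralLine_self⟩

lemma encard_commonAncestors_eq (g : Bool × V → V) (x : V) :
    (commonAncestors g x).encard = (commonAncestors (fun q => g (q.1, q.2 + x)) 0).encard := by
  have h := ancestralLine_add (V := V) (n := 0) (x := x)
  simp only [zero_add] at h
  rw [commonAncestors, commonAncestors, h, h, ← image_inter (add_left_injective x),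
    (add_left_injective x).injOn.encard_image]
  rfl

lemma curry_indicator (C : Set V) (g : Bool × V → V) (b : Bool) :
    curry ((Prod.snd ⁻¹' C).indicator g) b = C.indicator (curry g b) := by
  ext i
  by_cases hi : i ∈ C <;> simp [hi, curry, indicator]

def firstCommonAncestor (w : V →+ ℤ) (x : V) : Set (Bool × V → V) :=
  {g | x ≠ 0 ∧ x ∈ commonAncestors g 0 ∧ ∀ y ∈ commonAncestors g 0, y ≠ 0 → w y ≤ w x}

section Weight

variable (w : V →+ ℤ) {g : Bool × V → V} (hg : ∀ q, 0 < w (g q))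
include hg

lemma weight_curry_pos (b : Bool) (i : V) : 0 < w (curry g b i) := hg (b, i)

lemma exists_mem_firstCommonAncestor (h : commonAncestors g 0 ≠ {0}) :
    ∃ x, g ∈ firstCommonAncestor w x := by
  obtain ⟨y, hy, hy0⟩ : ∃ y ∈ commonAncestors g 0, y ≠ 0 := by
    by_contra! hc
    exact h (eq_singleton_iff_unique_mem.mpr ⟨zero_mem_commonAncestors g, hc⟩)
  have hbdd : ∀ z ∈ commonAncestors g 0, z ≠ 0 → w z ≤ 0 := fun z hz _ =>
    (weight_le_of_mem_ancestralLine w (weight_curry_pos w hg _) hz.1).trans_eq (map_zero w)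
  obtain ⟨_, ⟨x, ⟨hx, hx0⟩, rfl⟩, hmax⟩ := Int.exists_greatest_of_bdd
    (P := fun t => ∃ x, (x ∈ commonAncestors g 0 ∧ x ≠ 0) ∧ w x = t)
    ⟨0, by rintro _ ⟨z, ⟨hz, hz0⟩, rfl⟩; exact hbdd z hz hz0⟩ ⟨_, y, ⟨hy, hy0⟩, rfl⟩
  exact ⟨x, hx0, hx, fun z hz hz0 => hmax _ ⟨z, ⟨hz, hz0⟩, rfl⟩⟩

lemma eq_of_mem_firstCommonAncestor {x y : V} (hx : g ∈ firstCommonAncestor w x)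
    (hy : g ∈ firstCommonAncestor w y) : x = y :=
  eq_of_weight_eq w (weight_curry_pos w hg _) hx.2.1.1 hy.2.1.1
    (le_antisymm (hy.2.2 x hx.2.1 hx.1) (hx.2.2 y hy.2.1 hy.1))

lemma commonAncestors_ne_singleton_iff :
    commonAncestors g 0 ≠ {0} ↔ ∃ x, g ∈ firstCommonAncestor w x := by
  refine ⟨exists_mem_firstCommonAncestor w hg, ?_⟩
  rintro ⟨x, hx0, hx, -⟩ h
  rw [h] at hx
  exact hx0 hx

lemma encard_commonAncestors_of_mem_firstCommonAncestor {x : V}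
    (hx : g ∈ firstCommonAncestor w x) :
    (commonAncestors g 0).encard = (commonAncestors g x).encard + 1 := by
  obtain ⟨hx0, hx, hmax⟩ := hx
  have hzero : (0 : V) ∉ commonAncestors g x := fun h0 => by
    have := weight_lt_of_mem_ancestralLine w (weight_curry_pos w hg _) hx.1 hx0
    have := weight_le_of_mem_ancestralLine w (weight_curry_pos w hg _) h0.1
    rw [map_zero] at *
    omega
  have hsplit : commonAncestors g 0 = insert 0 (commonAncestors g x) := by
    refine Subset.antisymm (fun y hy => ?_) (insert_subset (zero_mem_commonAncestors g) ?_)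
    · obtain rfl | hy0 := eq_or_ne y 0
      · exact mem_insert _ _
      · exact mem_insert_of_mem _
          ⟨mem_ancestralLine_of_weight_le w (weight_curry_pos w hg _) hx.1 hy.1 (hmax y hy hy0),
           mem_ancestralLine_of_weight_le w (weight_curry_pos w hg _) hx.2 hy.2 (hmax y hy hy0)⟩
    · exact inter_subset_inter (ancestralLine_subset hx.1) (ancestralLine_subset hx.2)
  rw [hsplit, encard_insert_of_notMem hzero]

lemma lt_encard_commonAncestors_succ_iff (k : ℕ) :
    ((k + 1 : ℕ) : ℕ∞) < (commonAncestors g 0).encard ↔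
      ∃ x, g ∈ firstCommonAncestor w x ∧ (k : ℕ∞) < (commonAncestors g x).encard := by
  constructor
  · intro h
    obtain ⟨x, hx⟩ := exists_mem_firstCommonAncestor w hg fun h0 => by
      rw [h0, encard_singleton] at h
      exact absurd h (by simp)
    refine ⟨x, hx, ?_⟩
    rwa [encard_commonAncestors_of_mem_firstCommonAncestor w hg hx, Nat.cast_succ,
      ENat.add_lt_add_iff_right ENat.one_ne_top] at h
  · rintro ⟨x, hx, hk⟩
    rwa [encard_commonAncestors_of_mem_firstCommonAncestor w hg hx, Nat.cast_succ,
      ENat.add_lt_add_iff_right ENat.one_ne_top]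

lemma indicator_mem_firstCommonAncestor_iff (x : V) :
    (Prod.snd ⁻¹' {i | w x < w i}).indicator g ∈ firstCommonAncestor w x ↔
      g ∈ firstCommonAncestor w x := by
  set g' := (Prod.snd ⁻¹' {i | w x < w i}).indicator g
  have hsub : commonAncestors g' 0 ⊆ commonAncestors g 0 := by
    simp only [g', commonAncestors, curry_indicator]
    exact inter_subset_inter (ancestralLine_indicator_subset _) (ancestralLine_indicator_subset _)
  have hmem : ∀ y ∈ commonAncestors g 0, w x ≤ w y → y ∈ commonAncestors g' 0 :=
    fun y hy hxy => by
      simp only [g', commonAncestors, curry_indicator]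
      exact ⟨mem_ancestralLine_indicator_of_le w (weight_curry_pos w hg _) hy.1 hxy,
        mem_ancestralLine_indicator_of_le w (weight_curry_pos w hg _) hy.2 hxy⟩
  refine and_congr_right fun _ => ⟨fun ⟨hx, hmax⟩ => ⟨hsub hx, fun y hy hy0 => ?_⟩,
    fun ⟨hx, hmax⟩ => ⟨hmem x hx le_rfl, fun y hy hy0 => hmax y (hsub hy) hy0⟩⟩
  by_contra! hlt
  exact (hmax y (hmem y hy hlt.le) hy0).not_gt hlt

lemma commonAncestors_indicator_of_weight_le (x : V) :
    commonAncestors ((Prod.snd ⁻¹' {i | w i ≤ w x}).indicator g) x = commonAncestors g x := by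
  simp only [commonAncestors, curry_indicator]
  rw [ancestralLine_indicator_of_weight_le w (weight_curry_pos w hg false) le_rfl,
    ancestralLine_indicator_of_weight_le w (weight_curry_pos w hg true) le_rfl]

end Weight

section Measurability

variable [Countable V] [MeasurableSpace V] [DiscreteMeasurableSpace V]

lemma measurable_iterate_parent (m : ℕ) (n : V) :
    Measurable fun z : V → V => (fun i => i - z i)^[m] n := by
  induction m with
  | zero => exact measurable_const
  | succ m ih =>
    simp only [iterate_succ_apply']
    have : Measurable fun p : (V → V) × V => p.2 - p.1 p.2 :=
      measurable_from_prod_countable_left fun i =>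
        show Measurable fun z : V → V => i - z i by fun_prop
    exact this.comp (measurable_id.prodMk ih)

lemma measurableSet_mem_ancestralLine (n y : V) :
    MeasurableSet {z : V → V | y ∈ ancestralLine z n} := by
  simp only [ancestralLine, mem_range, ofPred_exists]
  exact .iUnion fun m => measurableSet_eq_fun (measurable_iterate_parent m n) measurable_const

lemma measurableSet_mem_ancestralLine_curry (b : Bool) (n y : V) :
    MeasurableSet[cylinderEvents (Prod.fst ⁻¹' {b})]
      {g : Bool × V → V | y ∈ ancestralLine (curry g b) n} :=
  measurable_curry_cylinderEvents b (measurableSet_mem_ancestralLine n y)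

lemma measurableSet_mem_commonAncestors (n y : V) :
    MeasurableSet {g : Bool × V → V | y ∈ commonAncestors g n} :=
  (cylinderEvents_le_pi _ (measurableSet_mem_ancestralLine_curry false n y)).inter
    (cylinderEvents_le_pi _ (measurableSet_mem_ancestralLine_curry true n y))

lemma measurableSet_lt_encard_commonAncestors (k : ℕ) (n : V) :
    MeasurableSet {g : Bool × V → V | (k : ℕ∞) < (commonAncestors g n).encard} := by
  simp_rw [← ENat.toENNReal_lt, ENat.toENNReal_coe]
  exact measurableSet_lt measurable_const
    (measurable_encard_of_measurableSet_mem (measurableSet_mem_commonAncestors n))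

lemma measurableSet_firstCommonAncestor (w : V →+ ℤ) (x : V) :
    MeasurableSet (firstCommonAncestor w x) := by
  have := measurableSet_mem_commonAncestors (V := V) 0
  unfold firstCommonAncestor
  measurability

lemma lintegral_encard_commonAncestors_eq_tsum (ν : Measure (Bool × V → V)) :
    ∫⁻ g, ((commonAncestors g 0).encard : ℝ≥0∞) ∂ν =
      ∑' k : ℕ, ν {g | (k : ℕ∞) < (commonAncestors g 0).encard} :=
  lintegral_toENNReal_eq_tsum_measure_lt ν fun k => measurableSet_lt_encard_commonAncestors k 0

lemma measurableSet_commonAncestors_ne_singleton :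
    MeasurableSet {g : Bool × V → V | commonAncestors g 0 ≠ {0}} := by
  have := measurableSet_mem_commonAncestors (V := V) 0
  simp_rw [ne_eq, eq_singleton_iff_unique_mem]
  measurability

end Measurability

section JumpMeasure

variable [MeasurableSpace V] (μ : Measure V) [IsProbabilityMeasure μ]

local notation "ν" => Measure.infinitePi fun _ : Bool × V => μ

lemma measure_lt_encard_commonAncestors_of_subsingleton [Subsingleton V] (k : ℕ) :
    ν {g | (k : ℕ∞) < (commonAncestors g 0).encard} = ν {g | commonAncestors g 0 ≠ {0}} ^ k := by
  have h (g : Bool × V → V) : commonAncestors g 0 = {0} :=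
    subsingleton_of_subsingleton.eq_singleton_of_mem (zero_mem_commonAncestors g)
  cases k <;> simp [h]

variable [Countable V]

lemma measure_zero_mem_ancestralLine_eq_zero [PartialOrder V] [IsOrderedAddMonoid V]
    (hμ : ∀ᵐ v ∂μ, 0 ≤ v) {v : V} (hv : ¬ 0 ≤ v) :
    ν {g | 0 ∈ ancestralLine (curry g false) v} = 0 :=
  measure_mono_null (fun g hg (hpos : ∀ q, 0 ≤ g q) =>
      hv (le_of_mem_ancestralLine (fun i => hpos (false, i)) hg))
    (ae_iff.mp (ae_forall_infinitePi (ι := Bool × V) μ hμ))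

variable [DiscreteMeasurableSpace V]

lemma measure_mem_ancestralLine_true (n y : V) :
    ν {g | y ∈ ancestralLine (curry g true) n} = ν {g | y ∈ ancestralLine (curry g false) n} :=
  (measurePreserving_comp_equiv_infinitePi μ
    (Equiv.prodCongr Equiv.boolNot (Equiv.refl V))).measure_preimage
    (cylinderEvents_le_pi _ (measurableSet_mem_ancestralLine_curry false n y)).nullMeasurableSet

lemma measure_zero_mem_ancestralLine (v : V) :
    ν {g | 0 ∈ ancestralLine (curry g false) v} = ν {g | -v ∈ ancestralLine (curry g false) 0} := by
  have hshift : {g : Bool × V → V | 0 ∈ ancestralLine (curry g false) v} =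
      (· ∘ Equiv.prodCongr (Equiv.refl Bool) (Equiv.addRight v)) ⁻¹'
        {g | -v ∈ ancestralLine (curry g false) 0} := by
    ext g
    have h := add_mem_ancestralLine_add_iff (z := curry g false) (y := -v) (n := 0) (x := v)
    rwa [neg_add_cancel, zero_add] at h
  rw [hshift]
  exact (measurePreserving_comp_equiv_infinitePi μ _).measure_preimage
    (cylinderEvents_le_pi _ (measurableSet_mem_ancestralLine_curry false 0 (-v))).nullMeasurableSet

lemma measure_mem_commonAncestors (y : V) :
    ν {g | y ∈ commonAncestors g 0} = ν {g | y ∈ ancestralLine (curry g false) 0} ^ 2 := by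
  have hindep := indep_cylinderEvents_infinitePi (fun _ : Bool × V => μ)
    (S := Prod.fst ⁻¹' {false}) (T := Prod.fst ⁻¹' {true}) (by simp [disjoint_iff, Set.ext_iff])
  have h := (Indep_iff _ _ _).mp hindep _ _ (measurableSet_mem_ancestralLine_curry false 0 y)
    (measurableSet_mem_ancestralLine_curry true 0 y)
  rwa [measure_mem_ancestralLine_true, ← sq] at h

lemma lintegral_encard_commonAncestors :
    ∫⁻ g, ((commonAncestors g 0).encard : ℝ≥0∞) ∂ν =
      ∑' v, ν {g | 0 ∈ ancestralLine (curry g false) v} ^ 2 := by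
  rw [lintegral_encard_eq_tsum _ (measurableSet_mem_commonAncestors 0), ← (Equiv.neg V).tsum_eq]
  simp only [measure_mem_commonAncestors, measure_zero_mem_ancestralLine, Equiv.neg_apply]

section Weight

variable (w : V →+ ℤ) (hμ : ∀ᵐ v ∂μ, 0 < w v)
include hμ

lemma measure_firstCommonAncestor_inter (x : V) (k : ℕ) :
    ν (firstCommonAncestor w x ∩ {g | (k : ℕ∞) < (commonAncestors g x).encard}) =
      ν (firstCommonAncestor w x) * ν {g | (k : ℕ∞) < (commonAncestors g 0).encard} := by
  have hpos := ae_forall_infinitePi (ι := Bool × V) μ hμ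
  set E := firstCommonAncestor w x
  set F := {g : Bool × V → V | (k : ℕ∞) < (commonAncestors g x).encard}
  set Hi : Set (Bool × V) := Prod.snd ⁻¹' {i | w x < w i}
  set Lo : Set (Bool × V) := Prod.snd ⁻¹' {i | w i ≤ w x}
  have hE : (Hi.indicator ⁻¹' E : Set (Bool × V → V)) =ᵐ[ν] E := Filter.eventuallyEq_set.mpr <| by
    filter_upwards [hpos] with g hg
    exact indicator_mem_firstCommonAncestor_iff w hg x
  have hF : (Lo.indicator ⁻¹' F : Set (Bool × V → V)) =ᵐ[ν] F := Filter.eventuallyEq_set.mpr <| by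
    filter_upwards [hpos] with g hg
    simp only [F, Lo, mem_preimage, mem_ofPred_eq, commonAncestors_indicator_of_weight_le w hg x]
  have hindep := indep_cylinderEvents_infinitePi (fun _ : Bool × V => μ) (S := Hi) (T := Lo)
    (Disjoint.preimage _ (disjoint_left.mpr fun _ (h₁ : w x < _) h₂ => h₂.not_gt h₁))
  have hshift : ν F = ν {g | (k : ℕ∞) < (commonAncestors g 0).encard} := by
    simp only [F, encard_commonAncestors_eq _ x]
    exact (measurePreserving_comp_equiv_infinitePi μ
      (Equiv.prodCongr (Equiv.refl Bool) (Equiv.addRight x))).measure_preimage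
      (measurableSet_lt_encard_commonAncestors k 0).nullMeasurableSet
  rw [← measure_congr (hE.inter hF), (Indep_iff _ _ _).mp hindep _ _
      (measurable_indicator_cylinderEvents Hi (measurableSet_firstCommonAncestor w x))
      (measurable_indicator_cylinderEvents Lo (measurableSet_lt_encard_commonAncestors k x)),
    measure_congr hE, measure_congr hF, hshift]

theorem measure_lt_encard_commonAncestors (k : ℕ) :
    ν {g | (k : ℕ∞) < (commonAncestors g 0).encard} = ν {g | commonAncestors g 0 ≠ {0}} ^ k := by
  have hpos := ae_forall_infinitePi (ι := Bool × V) μ hμ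
  induction k with
  | zero =>
    have (g : Bool × V → V) : (commonAncestors g 0).Nonempty := ⟨0, zero_mem_commonAncestors g⟩
    simp [encard_pos, this]
  | succ k ih =>
    calc ν {g | ((k + 1 : ℕ) : ℕ∞) < (commonAncestors g 0).encard}
        = ∑' x, ν (firstCommonAncestor w x ∩ {g | (k : ℕ∞) < (commonAncestors g x).encard}) :=
          measure_eq_tsum_of_ae hpos
            (fun x => (measurableSet_firstCommonAncestor w x).inter
              (measurableSet_lt_encard_commonAncestors k x))
            (fun g hg => lt_encard_commonAncestors_succ_iff w hg k)
            (fun g hg x y hx hy => eq_of_mem_firstCommonAncestor w hg hx.1 hy.1)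
      _ = ∑' x, ν (firstCommonAncestor w x) * ν {g | (k : ℕ∞) < (commonAncestors g 0).encard} :=
          tsum_congr fun x => measure_firstCommonAncestor_inter μ w hμ x k
      _ = ν {g | commonAncestors g 0 ≠ {0}} ^ (k + 1) := by
        rw [ENNReal.tsum_mul_right, ih, pow_succ', ← measure_eq_tsum_of_ae hpos
          (s := {g | commonAncestors g 0 ≠ {0}})
          (measurableSet_firstCommonAncestor w) (fun g hg => commonAncestors_ne_singleton_iff w hg)
          (fun g hg x y hx hy => eq_of_mem_firstCommonAncestor w hg hx hy)]

end Weight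

end JumpMeasure

section Lattice

variable {d : ℕ} (μ : Measure (Fin d → ℤ)) [IsProbabilityMeasure μ] (hμ : ∀ᵐ v ∂μ, ∀ i, 1 ≤ v i)
include hμ

local notation "ν" => Measure.infinitePi fun _ : Bool × (Fin d → ℤ) => μ

theorem measure_lt_encard_commonAncestors_of_one_le (k : ℕ) :
    ν {g | (k : ℕ∞) < (commonAncestors g 0).encard} = ν {g | commonAncestors g 0 ≠ {0}} ^ k := by
  obtain rfl | hd := d.eq_zero_or_pos
  · exact measure_lt_encard_commonAncestors_of_subsingleton μ k
  · have : Nonempty (Fin d) := ⟨⟨0, hd⟩⟩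
    refine measure_lt_encard_commonAncestors μ (∑ i, Pi.evalAddMonoidHom (fun _ => ℤ) i) ?_ k
    filter_upwards [hμ] with v hv
    simpa using Finset.sum_pos (fun i _ => hv i) Finset.univ_nonempty

theorem lintegral_encard_commonAncestors_eq_inv :
    ∫⁻ g, ((commonAncestors g 0).encard : ℝ≥0∞) ∂ν =
      (1 - ν {g | commonAncestors g 0 ≠ {0}})⁻¹ := by
  rw [lintegral_encard_commonAncestors_eq_tsum]
  simp only [measure_lt_encard_commonAncestors_of_one_le μ hμ]
  exact ENNReal.tsum_geometric _

theorem tsum_measure_zero_mem_ancestralLine_sq_eq :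
    ∑' v, ν {g | 0 ∈ ancestralLine (curry g false) v} ^ 2 =
      ∑' k : Fin d → ℕ, ν {g | 0 ∈ ancestralLine (curry g false) fun i => (k i : ℤ)} ^ 2 := by
  refine (Injective.tsum_eq (fun k k' h => funext fun i => by exact_mod_cast congrFun h i)
    fun v hv => ?_).symm
  have hv0 : 0 ≤ v := by
    by_contra h
    exact hv (by simp [measure_zero_mem_ancestralLine_eq_zero μ
      (hμ.mono fun _ h i => zero_le_one.trans (h i)) h])
  exact ⟨fun i => (v i).toNat, funext fun i => Int.toNat_of_nonneg (hv0 i)⟩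

end Lattice

end AncestralLine

open AncestralLine

theorem expected_intersection_of_independent_ancestral_lines_general
    {d : ℕ} {Ω : Type*} [MeasurableSpace Ω]
    (P : Measure Ω)
    (μ : Measure (Fin d → ℤ)) [IsProbabilityMeasure μ]
    (hsupp : ∀ k : Fin d → ℤ, (¬ ∀ i, 1 ≤ k i) → μ {k} = 0)
    (Z : Bool → (Fin d → ℤ) → Ω → (Fin d → ℤ))
    (hZmeas : ∀ b i, Measurable (Z b i))
    (hZlaw : ∀ b i, Measure.map (Z b i) P = μ)
    (hZindep : iIndepFun
      (fun p : Bool × (Fin d → ℤ) => Z p.1 p.2) P)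
    (A : (Fin d → ℤ) → Ω → Set (Fin d → ℤ))
    (hA : ∀ n ω, A n ω = {j | ∃ m : ℕ, (fun i => i - Z false i ω)^[m] n = j})
    (A' : (Fin d → ℤ) → Ω → Set (Fin d → ℤ))
    (hA' : ∀ n ω, A' n ω = {j | ∃ m : ℕ, (fun i => i - Z true i ω)^[m] n = j}) :
    (∫⁻ ω, ((A 0 ω ∩ A' 0 ω).encard : ℝ≥0∞) ∂P
        = ∑' k : Fin d → ℕ,
            (P {ω | (0 : Fin d → ℤ) ∈ A (fun i => (k i : ℤ)) ω}) ^ 2) ∧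
    (∀ k : ℕ, P {ω | (k : ℕ∞) < (A 0 ω ∩ A' 0 ω).encard}
        = (P {ω | A 0 ω ∩ A' 0 ω ≠ {0}}) ^ k) ∧
    (∫⁻ ω, ((A 0 ω ∩ A' 0 ω).encard : ℝ≥0∞) ∂P
        = (1 - P {ω | A 0 ω ∩ A' 0 ω ≠ {0}})⁻¹) := by
  set G : Ω → Bool × (Fin d → ℤ) → Fin d → ℤ := fun ω q => Z q.1 q.2 ω
  have hG : MeasurePreserving G P (Measure.infinitePi fun _ => μ) :=
    ⟨measurable_pi_lambda _ fun q => hZmeas q.1 q.2,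
      (hZindep.map_fun_eq_infinitePi_map fun q : Bool × (Fin d → ℤ) => hZmeas q.1 q.2).trans
        (by simp only [hZlaw])⟩
  have hP {S} (hS : MeasurableSet S) : P {ω | G ω ∈ S} = Measure.infinitePi (fun _ => μ) S :=
    hG.measure_preimage hS.nullMeasurableSet
  have hμ : ∀ᵐ v ∂μ, ∀ i, 1 ≤ v i :=
    ae_iff_of_countable.mpr fun v hv => not_not.mp fun h => hv (hsupp v h)
  have hcommon ω : A 0 ω ∩ A' 0 ω = commonAncestors (G ω) 0 := by rw [hA, hA']; rfl
  have hE : ∫⁻ ω, ((A 0 ω ∩ A' 0 ω).encard : ℝ≥0∞) ∂P =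
      ∫⁻ g, ((commonAncestors g 0).encard : ℝ≥0∞) ∂Measure.infinitePi fun _ => μ := by
    simp only [hcommon]
    exact hG.lintegral_comp
      (measurable_encard_of_measurableSet_mem (measurableSet_mem_commonAncestors 0))
  have hNT : P {ω | A 0 ω ∩ A' 0 ω ≠ {0}} =
      Measure.infinitePi (fun _ => μ) {g | commonAncestors g 0 ≠ {0}} := by
    simp only [hcommon]
    exact hP measurableSet_commonAncestors_ne_singleton
  refine ⟨?_, fun k => ?_, ?_⟩
  · rw [hE, lintegral_encard_commonAncestors, tsum_measure_zero_mem_ancestralLine_sq_eq μ hμ]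
    simp only [hA]
    exact tsum_congr fun k => congrArg (· ^ 2)
      (hP (cylinderEvents_le_pi _ (measurableSet_mem_ancestralLine_curry false _ 0))).symm
  · rw [hNT, ← measure_lt_encard_commonAncestors_of_one_le μ hμ]
    simp only [hcommon]
    exact hP (measurableSet_lt_encard_commonAncestors k 0)
  · rw [hE, lintegral_encard_commonAncestors_eq_inv μ hμ, hNT]

/-- For two independent copies of the ancestral-line graph driven by
i.i.d. jumps with law `μ` supported in `{1,2,…}^d`, with `A, A'` the two ancestral lines
of `0` and `q_k = P(0 ∈ A_k)`:
(1) `E[#(A ∩ A')] = Σ_{k∈ℕ^d} q_k²` in `[0,∞]`;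
(2) `P(#(A ∩ A') > k) = P(A ∩ A' ≠ {0})^k` for every `k ∈ ℕ`;
(3) `E[#(A ∩ A')] = (1 − P(A ∩ A' ≠ {0}))⁻¹` in `[0,∞]`. -/
theorem expected_intersection_of_independent_ancestral_lines
    {d : ℕ} {Ω : Type*} [MeasurableSpace Ω]
    (P : Measure Ω) [IsProbabilityMeasure P]
    (μ : Measure (Fin d → ℤ)) [IsProbabilityMeasure μ]
    (hsupp : ∀ k : Fin d → ℤ, (¬ ∀ i, 1 ≤ k i) → μ {k} = 0)
    (Z : Bool → (Fin d → ℤ) → Ω → (Fin d → ℤ))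
    (hZmeas : ∀ b i, Measurable (Z b i))
    (hZlaw : ∀ b i, Measure.map (Z b i) P = μ)
    (hZindep : iIndepFun
      (fun p : Bool × (Fin d → ℤ) => Z p.1 p.2) P)
    (A : (Fin d → ℤ) → Ω → Set (Fin d → ℤ))
    (hA : ∀ n ω, A n ω = {j | ∃ m : ℕ, (fun i => i - Z false i ω)^[m] n = j})
    (A' : (Fin d → ℤ) → Ω → Set (Fin d → ℤ))
    (hA' : ∀ n ω, A' n ω = {j | ∃ m : ℕ, (fun i => i - Z true i ω)^[m] n = j}) :
    (∫⁻ ω, ((A 0 ω ∩ A' 0 ω).encard : ℝ≥0∞) ∂P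
        = ∑' k : Fin d → ℕ,
            (P {ω | (0 : Fin d → ℤ) ∈ A (fun i => (k i : ℤ)) ω}) ^ 2) ∧
    (∀ k : ℕ, P {ω | (k : ℕ∞) < (A 0 ω ∩ A' 0 ω).encard}
        = (P {ω | A 0 ω ∩ A' 0 ω ≠ {0}}) ^ k) ∧
    (∫⁻ ω, ((A 0 ω ∩ A' 0 ω).encard : ℝ≥0∞) ∂P
        = (1 - P {ω | A 0 ω ∩ A' 0 ω ≠ {0}})⁻¹) :=
  expected_intersection_of_independent_ancestral_lines_general P μ hsupp Z hZmeas hZlaw hZindep A hA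
    A' hA'
end

section
/- Let 0 < α_i < 1 for i = 1,…,d with Σ_{i=1}^d 1/α_i > 2, let E = diag(1/α_1,…,1/α_d), and let Λ : ℝ^d → ℂ be continuous, E-homogeneous (Λ(t^E x) = tΛ(x) for t > 0) and with Λ(x) ≠ 0 for x ≠ 0. For t, s ∈ ℝ^d define C(t,s) = ∫_{ℝ^d} Π_{k=1}^d [(e^{i t_k y_k} − 1)(e^{-i s_k y_k} − 1) / (2π |y_k|²)] · |Λ(y)|^{-2} dy. Then the integral converges absolutely for every t, s ∈ ℝ^d, and C satisfies the operator-scaling relation C(λ^E t, λ^E s) = λ^{2 + q(E)} C(t,s) for all λ > 0 and t, s ∈ ℝ^d, where q(E) = Σ_{i=1}^d 1/α_i and λ^E t = (λ^{1/α_1}t_1,…,λ^{1/α_d}t_d). -/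
/-!
By compactness of the level set `{Σ |x_k|^{α_k} = 1}` and `E`-homogeneity, `|Λ(y)|` dominates
a multiple of the `E`-homogeneous gauge `Σ |y_k|^{α_k}`, which by weighted AM-GM dominates
`Π |y_k|^{1/q}` with `q = q(E)`. Hence the integrand is bounded by a product of one-dimensional
functions `min(1, M|u|)² |u|^{-2-2/q}`, integrable because `2/q < 1`. The scaling relation
is the substitution `y = λ^{-E} z`: its Jacobian is `λ^{-q}`, each kernel factor picks up
`λ^{2/α_k}` and `|Λ|^{-2}` picks up `λ²`.
-/

open MeasureTheory Set

noncomputable def incrementKernel (a b u : ℝ) : ℂ :=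
  (Complex.exp (Complex.I * ((a * u : ℝ) : ℂ)) - 1) *
    (Complex.exp (-Complex.I * ((b * u : ℝ) : ℂ)) - 1) / ((2 * Real.pi * u ^ 2 : ℝ) : ℂ)

lemma norm_exp_I_mul_sub_one_le (x : ℝ) :
    ‖Complex.exp (Complex.I * x) - 1‖ ≤ 2 * min 1 |x| := by
  rcases le_total |x| 1 with h | h
  · have hx : ‖Complex.I * x‖ = |x| := by simp
    rw [min_eq_right h, ← hx]
    exact Complex.norm_exp_sub_one_le (hx ▸ h)
  · rw [min_eq_left h]
    calc ‖Complex.exp (Complex.I * x) - 1‖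
        _ ≤ ‖Complex.exp (Complex.I * x)‖ + ‖(1 : ℂ)‖ := norm_sub_le _ _
        _ = 2 * 1 := by rw [Complex.norm_exp_I_mul_ofReal]; norm_num

lemma norm_incrementKernel_le {a b M : ℝ} (ha : |a| ≤ M) (hb : |b| ≤ M) (u : ℝ) :
    ‖incrementKernel a b u‖ ≤ 2 / Real.pi * (min 1 (M * |u|) ^ 2 * (u ^ 2)⁻¹) := by
  have hbound : ∀ c : ℝ, |c| ≤ M → min 1 |c * u| ≤ min 1 (M * |u|) := fun c hc =>
    min_le_min le_rfl (by rw [abs_mul]; exact mul_le_mul_of_nonneg_right hc (abs_nonneg u))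
  have h₁ := (norm_exp_I_mul_sub_one_le (a * u)).trans
    (mul_le_mul_of_nonneg_left (hbound a ha) zero_le_two)
  have h₂ : ‖Complex.exp (-Complex.I * ((b * u : ℝ) : ℂ)) - 1‖ ≤
      2 * min 1 (M * |u|) := by
    have := norm_exp_I_mul_sub_one_le (-(b * u))
    rw [abs_neg, Complex.ofReal_neg, mul_neg, ← neg_mul] at this
    exact this.trans (mul_le_mul_of_nonneg_left (hbound b hb) zero_le_two)
  rw [incrementKernel, norm_div, norm_mul, Complex.norm_real, Real.norm_eq_abs,
    abs_of_nonneg (by positivity)]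
  calc _ ≤ 2 * min 1 (M * |u|) * (2 * min 1 (M * |u|)) / (2 * Real.pi * u ^ 2) := by
        gcongr
        exact (norm_nonneg _).trans h₁
    _ = 2 / Real.pi * (min 1 (M * |u|) ^ 2 * (u ^ 2)⁻¹) := by
        rw [div_eq_mul_inv, mul_inv, mul_inv]; ring

lemma incrementKernel_mul_mul_inv_mul {r : ℝ} (hr : r ≠ 0) (a b u : ℝ) :
    incrementKernel (r * a) (r * b) (r⁻¹ * u) =
      ((r ^ 2 : ℝ) : ℂ) * incrementKernel a b u := by
  have harg : ∀ c : ℝ, r * c * (r⁻¹ * u) = c * u := fun c => by field_simp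
  simp only [incrementKernel, harg]
  rw [show 2 * Real.pi * (r⁻¹ * u) ^ 2 = (r ^ 2)⁻¹ * (2 * Real.pi * u ^ 2) by ring]
  push_cast
  rw [div_eq_mul_inv, div_eq_mul_inv, mul_inv, inv_inv]
  ring

lemma integrableOn_Ioi_min_sq_mul_rpow {M p : ℝ} (hM : 0 < M) (hp0 : 0 < p) (hp1 : p < 1) :
    IntegrableOn (fun u : ℝ => min 1 (M * u) ^ 2 * u ^ (-(2 + p))) (Ioi 0) := by
  have hmeas : Measurable fun u : ℝ => min 1 (M * u) ^ 2 * u ^ (-(2 + p)) := by fun_prop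
  rw [← Ioc_union_Ioi_eq_Ioi (inv_pos.2 hM).le, integrableOn_union]
  constructor
  · have hmaj : IntegrableOn (fun u : ℝ => M ^ 2 * u ^ (-p)) (Ioc 0 M⁻¹) :=
      (((intervalIntegral.integrableOn_Ioo_rpow_iff (t := 2 * M⁻¹) (by positivity)).2
        (by linarith)).mono_set (Ioc_subset_Ioo_right (by linarith [inv_pos.2 hM]))).const_mul _
    refine hmaj.mono' hmeas.aestronglyMeasurable ?_
    filter_upwards [ae_restrict_mem measurableSet_Ioc] with u hu
    have hu : 0 < u := hu.1
    rw [Real.norm_of_nonneg (by positivity)]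
    calc min 1 (M * u) ^ 2 * u ^ (-(2 + p)) ≤ (M * u) ^ 2 * u ^ (-(2 + p)) := by
          gcongr
          exact min_le_right _ _
      _ = M ^ 2 * u ^ (-p) := by
          rw [neg_add, Real.rpow_add hu, Real.rpow_neg hu.le, Real.rpow_two]
          field_simp
  · refine (integrableOn_Ioi_rpow_of_lt (a := -(2 + p)) (by linarith) (inv_pos.2 hM)).mono'
      hmeas.aestronglyMeasurable ?_
    filter_upwards [ae_restrict_mem measurableSet_Ioi] with u hu
    have hu0 : 0 < u := (inv_pos.2 hM).trans hu
    rw [Real.norm_of_nonneg (by positivity)]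
    calc min 1 (M * u) ^ 2 * u ^ (-(2 + p)) ≤ 1 ^ 2 * u ^ (-(2 + p)) := by
          gcongr
          exact min_le_left _ _
      _ = u ^ (-(2 + p)) := by rw [one_pow, one_mul]

lemma integrable_min_sq_mul_abs_rpow {M p : ℝ} (hM : 0 < M) (hp0 : 0 < p) (hp1 : p < 1) :
    Integrable fun u : ℝ => min 1 (M * |u|) ^ 2 * |u| ^ (-(2 + p)) := by
  set g : ℝ → ℝ := fun u => min 1 (M * |u|) ^ 2 * |u| ^ (-(2 + p))
  have hIoi : IntegrableOn g (Ioi 0) :=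
    (integrableOn_Ioi_min_sq_mul_rpow hM hp0 hp1).congr_fun
      (fun u (hu : 0 < u) => by simp only [g, abs_of_pos hu]) measurableSet_Ioi
  have hIio : IntegrableOn g (Iio 0) := by
    rw [← (Measure.measurePreserving_neg (volume : Measure ℝ)).integrableOn_comp_preimage
      (Homeomorph.neg ℝ).measurableEmbedding]
    simpa [Function.comp_def, g] using hIoi
  rw [← integrableOn_univ, ← Iio_union_Ici (a := (0 : ℝ)), integrableOn_union,
    integrableOn_Ici_iff_integrableOn_Ioi]
  exact ⟨hIio, hIoi⟩

section Gauge

variable {ι : Type*} (α : ι → ℝ)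

noncomputable def anisoScale (t : ℝ) (x : ι → ℝ) : ι → ℝ :=
  fun i => t ^ (1 / α i) * x i

variable [Fintype ι]

noncomputable def anisotropicGauge (x : ι → ℝ) : ℝ := ∑ k, |x k| ^ α k

variable {α}

omit [Fintype ι] in
lemma anisoScale_one (x : ι → ℝ) : anisoScale α 1 x = x := by
  ext i; simp [anisoScale]

omit [Fintype ι] in
lemma anisoScale_anisoScale {s t : ℝ} (hs : 0 ≤ s) (ht : 0 ≤ t) (x : ι → ℝ) :
    anisoScale α s (anisoScale α t x) = anisoScale α (s * t) x := by
  ext i; simp only [anisoScale, Real.mul_rpow hs ht, mul_assoc]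

lemma anisotropicGauge_pos {x : ι → ℝ} (hx : x ≠ 0) : 0 < anisotropicGauge α x := by
  obtain ⟨k, hk⟩ := Function.ne_iff.1 hx
  exact (Real.rpow_pos_of_pos (abs_pos.2 hk) _).trans_le
    (Finset.single_le_sum (fun i _ => Real.rpow_nonneg (abs_nonneg _) _) (Finset.mem_univ k))

lemma continuous_anisotropicGauge (hα : ∀ i, 0 < α i) : Continuous (anisotropicGauge α) :=
  continuous_finsetSum _ fun k _ =>
    ((Real.continuous_rpow_const (hα k).le).comp continuous_abs).comp (continuous_apply k)

lemma anisotropicGauge_anisoScale (hα : ∀ i, 0 < α i) {t : ℝ} (ht : 0 ≤ t)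
    (x : ι → ℝ) :
    anisotropicGauge α (anisoScale α t x) = t * anisotropicGauge α x := by
  simp only [anisotropicGauge, anisoScale, Finset.mul_sum]
  refine Finset.sum_congr rfl fun k _ => ?_
  rw [abs_mul, Real.mul_rpow (abs_nonneg _) (abs_nonneg _), abs_of_nonneg (by positivity),
    ← Real.rpow_mul ht, one_div_mul_cancel (hα k).ne', Real.rpow_one]

lemma isCompact_anisotropicGauge_eq_one (hα : ∀ i, 0 < α i) :
    IsCompact {x : ι → ℝ | anisotropicGauge α x = 1} := by
  refine (isCompact_univ_pi fun _ => isCompact_Icc (a := -1) (b := 1)).of_isClosed_subset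
    (isClosed_eq (continuous_anisotropicGauge hα) continuous_const) fun x hx k _ => ?_
  have hk : |x k| ^ α k ≤ 1 := hx ▸
    Finset.single_le_sum (fun i _ => Real.rpow_nonneg (abs_nonneg _) _) (Finset.mem_univ k)
  exact abs_le.1 <|
    (Real.rpow_le_rpow_iff (abs_nonneg _) zero_le_one (hα k)).1 (by rwa [Real.one_rpow])

lemma exists_pos_mul_anisotropicGauge_le [Nonempty ι] (hα : ∀ i, 0 < α i)
    {N : (ι → ℝ) → ℝ} (hNc : Continuous N)
    (hNh : ∀ t : ℝ, 0 < t → ∀ x, N (anisoScale α t x) = t * N x)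
    (hN0 : ∀ x, x ≠ 0 → 0 < N x) :
    ∃ c, 0 < c ∧ ∀ y, y ≠ 0 → c * anisotropicGauge α y ≤ N y := by
  classical
  set S := {x : ι → ℝ | anisotropicGauge α x = 1}
  have hS : S.Nonempty := by
    obtain ⟨k⟩ := ‹Nonempty ι›
    refine ⟨Pi.single k 1, ?_⟩
    simp only [S, mem_ofPred_eq, anisotropicGauge]
    rw [Finset.sum_eq_single k (fun i _ hi => by simp [Pi.single_eq_of_ne hi, (hα i).ne'])
      (by simp)]
    simp
  obtain ⟨x₀, hx₀S, hmin⟩ := (isCompact_anisotropicGauge_eq_one hα).exists_isMinOn hS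
    hNc.continuousOn
  have hx₀ : x₀ ≠ 0 := by
    rintro rfl
    have : anisotropicGauge α (0 : ι → ℝ) = 0 := by
      simp [anisotropicGauge, fun i => (hα i).ne']
    exact zero_ne_one (this.symm.trans hx₀S)
  refine ⟨N x₀, hN0 x₀ hx₀, fun y hy => ?_⟩
  set r := anisotropicGauge α y
  have hr : 0 < r := anisotropicGauge_pos hy
  set θ := anisoScale α r⁻¹ y
  have hθS : θ ∈ S := by
    simp only [S, mem_ofPred_eq, θ, anisotropicGauge_anisoScale hα (inv_nonneg.2 hr.le)]
    exact inv_mul_cancel₀ hr.ne'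
  have hyθ : anisoScale α r θ = y := by
    rw [anisoScale_anisoScale hr.le (inv_nonneg.2 hr.le), mul_inv_cancel₀ hr.ne', anisoScale_one]
  calc N x₀ * r ≤ N θ * r := mul_le_mul_of_nonneg_right (hmin hθS) hr.le
    _ = N y := by rw [← hyθ, hNh r hr, mul_comm]

lemma prod_abs_rpow_le_anisotropicGauge [Nonempty ι] (hα : ∀ i, 0 < α i) (y : ι → ℝ) :
    ∏ k, |y k| ^ (∑ i, 1 / α i)⁻¹ ≤ anisotropicGauge α y := by
  set q := ∑ i, 1 / α i
  have hq : 0 < q := Finset.sum_pos (fun i _ => one_div_pos.2 (hα i)) Finset.univ_nonempty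
  have hw : ∀ k, 1 / α k / q ≤ 1 := fun k => (div_le_one hq).2 <|
    Finset.single_le_sum (fun i _ => (one_div_pos.2 (hα i)).le) (Finset.mem_univ k)
  -- weighted AM-GM with weights `(1/α_k)/q`
  calc ∏ k, |y k| ^ q⁻¹ = ∏ k, (|y k| ^ α k) ^ (1 / α k / q) := by
        refine Finset.prod_congr rfl fun k _ => ?_
        rw [← Real.rpow_mul (abs_nonneg _)]
        congr 1
        field_simp [(hα k).ne']
    _ ≤ ∑ k, 1 / α k / q * |y k| ^ α k :=
        Real.geom_mean_le_arith_mean_weighted _ _ _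
          (fun k _ => div_nonneg (one_div_pos.2 (hα k)).le hq.le)
          (by rw [← Finset.sum_div, div_self hq.ne'])
          (fun k _ => Real.rpow_nonneg (abs_nonneg _) _)
    _ ≤ anisotropicGauge α y :=
        Finset.sum_le_sum fun k _ =>
          mul_le_of_le_one_left (Real.rpow_nonneg (abs_nonneg _) _) (hw k)

end Gauge

lemma integral_comp_mul_pi {ι : Type*} [Fintype ι] {E : Type*} [NormedAddCommGroup E]
    [NormedSpace ℝ E] {D : ι → ℝ} (hD : ∀ i, D i ≠ 0) (f : (ι → ℝ) → E) :
    ∫ y : ι → ℝ, f (fun i => D i * y i) = |∏ i, D i|⁻¹ • ∫ y, f y := by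
  classical
  let e : (ι → ℝ) ≃ᵐ (ι → ℝ) :=
    MeasurableEquiv.piCongrRight fun i => MeasurableEquiv.mulLeft₀ (D i) (hD i)
  have hmap : Measure.map e volume = ENNReal.ofReal |∏ i, D i|⁻¹ • volume := by
    have h := Real.map_matrix_volume_pi_eq_smul_volume_pi (M := Matrix.diagonal D)
      (by simpa [Matrix.det_diagonal] using Finset.prod_ne_zero_iff.2 fun i _ => hD i)
    rw [Matrix.det_diagonal, abs_inv] at h
    convert h using 2
    ext y i
    simp [e, Matrix.mulVec_diagonal, MeasurableEquiv.piCongrRight, MeasurableEquiv.mulLeft₀]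
  calc ∫ y : ι → ℝ, f (fun i => D i * y i) = ∫ y, f (e y) := rfl
    _ = |∏ i, D i|⁻¹ • ∫ y, f y := by
      rw [← e.measurableEmbedding.integral_map, hmap, integral_smul_measure,
        ENNReal.toReal_ofReal (by positivity)]

section Covariance

variable {ι : Type*} [Fintype ι]

noncomputable def covarianceIntegrand (Λ : (ι → ℝ) → ℂ) (t s y : ι → ℝ) : ℂ :=
  (∏ k, incrementKernel (t k) (s k) (y k)) * ((‖Λ y‖ ^ 2)⁻¹ : ℝ)

lemma exists_inv_norm_sq_le_prod_abs_rpow [Nonempty ι] {α : ι → ℝ} (hα : ∀ i, 0 < α i)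
    {Λ : (ι → ℝ) → ℂ} (hΛc : Continuous Λ)
    (hΛh : ∀ t : ℝ, 0 < t → ∀ x, Λ (anisoScale α t x) = (t : ℂ) * Λ x)
    (hΛ0 : ∀ x, x ≠ 0 → Λ x ≠ 0) :
    ∃ c, 0 < c ∧ ∀ y : ι → ℝ, (∀ k, y k ≠ 0) →
      (‖Λ y‖ ^ 2)⁻¹ ≤ c * ∏ k, |y k| ^ (-(2 / ∑ i, 1 / α i)) := by
  obtain ⟨c, hc, hlow⟩ := exists_pos_mul_anisotropicGauge_le hα hΛc.norm
    (fun t ht x => by rw [hΛh t ht, norm_mul, Complex.norm_real, Real.norm_of_nonneg ht.le])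
    (fun x hx => norm_pos_iff.2 (hΛ0 x hx))
  refine ⟨(c ^ 2)⁻¹, by positivity, fun y hy => ?_⟩
  set q := ∑ i, 1 / α i
  have hprod : 0 < ∏ k, |y k| ^ q⁻¹ :=
    Finset.prod_pos fun k _ => Real.rpow_pos_of_pos (abs_pos.2 (hy k)) _
  have hΛy : c * ∏ k, |y k| ^ q⁻¹ ≤ ‖Λ y‖ :=
    (mul_le_mul_of_nonneg_left (prod_abs_rpow_le_anisotropicGauge hα y) hc.le).trans
      (hlow y (Function.ne_iff.2 ⟨Classical.arbitrary ι, hy _⟩))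
  calc (‖Λ y‖ ^ 2)⁻¹ ≤ ((c * ∏ k, |y k| ^ q⁻¹) ^ 2)⁻¹ := by gcongr
    _ = (c ^ 2)⁻¹ * ∏ k, |y k| ^ (-(2 / q)) := by
      rw [mul_pow, mul_inv, ← Finset.prod_pow, ← Finset.prod_inv_distrib]
      congr 1
      refine Finset.prod_congr rfl fun k _ => ?_
      rw [← Real.rpow_natCast, ← Real.rpow_mul (abs_nonneg _), ← Real.rpow_neg (abs_nonneg _)]
      ring_nf

lemma norm_covarianceIntegrand_le {Λ : (ι → ℝ) → ℂ} {c p : ℝ} {M t s y : ι → ℝ}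
    (ht : ∀ k, |t k| ≤ M k) (hs : ∀ k, |s k| ≤ M k) (hy : ∀ k, y k ≠ 0)
    (hΛy : (‖Λ y‖ ^ 2)⁻¹ ≤ c * ∏ k, |y k| ^ (-p)) :
    ‖covarianceIntegrand Λ t s y‖ ≤
      c * ∏ k, 2 / Real.pi * (min 1 (M k * |y k|) ^ 2 * |y k| ^ (-(2 + p))) := by
  have hsplit : ∀ k, |y k| ^ (-(2 + p)) = (y k ^ 2)⁻¹ * |y k| ^ (-p) := fun k => by
    rw [neg_add, Real.rpow_add (abs_pos.2 (hy k)), Real.rpow_neg (abs_nonneg _), Real.rpow_two,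
      sq_abs]
  calc ‖covarianceIntegrand Λ t s y‖
      _ = (∏ k, ‖incrementKernel (t k) (s k) (y k)‖) * (‖Λ y‖ ^ 2)⁻¹ := by
        rw [covarianceIntegrand, norm_mul, norm_prod, Complex.norm_real,
          Real.norm_of_nonneg (by positivity)]
      _ ≤ (∏ k, 2 / Real.pi * (min 1 (M k * |y k|) ^ 2 * (y k ^ 2)⁻¹)) *
          (c * ∏ k, |y k| ^ (-p)) := by
        gcongr with k
        exact norm_incrementKernel_le (ht k) (hs k) _
      _ = c * ∏ k, 2 / Real.pi * (min 1 (M k * |y k|) ^ 2 * |y k| ^ (-(2 + p))) := by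
        rw [mul_left_comm, ← Finset.prod_mul_distrib]
        simp only [hsplit]
        ring_nf

lemma integrable_covarianceIntegrand {α : ι → ℝ} (hα : ∀ i, 0 < α i)
    (hq : 2 < ∑ i, 1 / α i) {Λ : (ι → ℝ) → ℂ} (hΛc : Continuous Λ)
    (hΛh : ∀ t : ℝ, 0 < t → ∀ x, Λ (anisoScale α t x) = (t : ℂ) * Λ x)
    (hΛ0 : ∀ x, x ≠ 0 → Λ x ≠ 0) (t s : ι → ℝ) :
    Integrable (covarianceIntegrand Λ t s) := by
  have : Nonempty ι := by
    by_contra h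
    rw [not_nonempty_iff] at h
    rw [Finset.univ_eq_empty, Finset.sum_empty] at hq
    norm_num at hq
  obtain ⟨c, -, hΛy⟩ := exists_inv_norm_sq_le_prod_abs_rpow hα hΛc hΛh hΛ0
  set p := 2 / ∑ i, 1 / α i
  have hp0 : 0 < p := by positivity
  have hp1 : p < 1 := (div_lt_one (by linarith)).2 hq
  set M : ι → ℝ := fun k => max (max |t k| |s k|) 1
  have hmaj : Integrable fun y : ι → ℝ =>
      c * ∏ k, 2 / Real.pi * (min 1 (M k * |y k|) ^ 2 * |y k| ^ (-(2 + p))) :=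
    (Integrable.fintype_prod
      (f := fun k u => 2 / Real.pi * (min 1 (M k * |u|) ^ 2 * |u| ^ (-(2 + p))))
      fun k => ((integrable_min_sq_mul_abs_rpow (zero_lt_one.trans_le (le_max_right _ _))
        hp0 hp1).const_mul _)).const_mul _
  have hae : ∀ᵐ y : ι → ℝ, ∀ k, y k ≠ 0 := by
    rw [ae_all_iff]
    intro k
    simpa only [volume_pi] using Measure.ae_eval_ne (fun _ : ι => (volume : Measure ℝ)) k 0
  have hmeas : Measurable (covarianceIntegrand Λ t s) := by
    have := hΛc.measurable
    unfold covarianceIntegrand incrementKernel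
    fun_prop
  refine hmaj.mono' hmeas.aestronglyMeasurable ?_
  filter_upwards [hae] with y hy
  exact norm_covarianceIntegrand_le (fun k => (le_max_left _ _).trans (le_max_left _ _))
    (fun k => (le_max_right _ _).trans (le_max_left _ _)) hy (hΛy y hy)

end Covariance

section Scaling

variable {ι : Type*} [Fintype ι] {α : ι → ℝ} {Λ : (ι → ℝ) → ℂ}

lemma covarianceIntegrand_anisoScale
    (hΛh : ∀ t : ℝ, 0 < t → ∀ x, Λ (anisoScale α t x) = (t : ℂ) * Λ x)
    {lam : ℝ} (hlam : 0 < lam) (t s z : ι → ℝ) :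
    covarianceIntegrand Λ (anisoScale α lam t) (anisoScale α lam s) (anisoScale α lam⁻¹ z) =
      ((lam ^ (2 * ∑ i, 1 / α i + 2) : ℝ) : ℂ) * covarianceIntegrand Λ t s z := by
  have hz : anisoScale α lam⁻¹ z = fun k => (lam ^ (1 / α k))⁻¹ * z k := by
    ext k; rw [anisoScale, Real.inv_rpow hlam.le]
  have hkernel : ∏ k, incrementKernel (anisoScale α lam t k) (anisoScale α lam s k)
      (anisoScale α lam⁻¹ z k) =
      ((lam ^ (2 * ∑ i, 1 / α i) : ℝ) : ℂ) * ∏ k, incrementKernel (t k) (s k) (z k) := by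
    rw [hz, Finset.mul_sum, Real.rpow_sum_of_pos hlam, Complex.ofReal_prod,
      ← Finset.prod_mul_distrib]
    refine Finset.prod_congr rfl fun k _ => ?_
    rw [anisoScale, anisoScale, incrementKernel_mul_mul_inv_mul (Real.rpow_pos_of_pos hlam _).ne',
      ← Real.rpow_natCast, ← Real.rpow_mul hlam.le]
    ring_nf
  have hΛz : (‖Λ (anisoScale α lam⁻¹ z)‖ ^ 2)⁻¹ = lam ^ 2 * (‖Λ z‖ ^ 2)⁻¹ := by
    rw [hΛh _ (inv_pos.2 hlam), norm_mul, Complex.norm_real, Real.norm_of_nonneg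
      (inv_pos.2 hlam).le, mul_pow, mul_inv, inv_pow, inv_inv]
  rw [covarianceIntegrand, covarianceIntegrand, hkernel, hΛz, Real.rpow_add hlam,
    Real.rpow_two]
  push_cast
  ring

lemma integral_covarianceIntegrand_anisoScale
    (hΛh : ∀ t : ℝ, 0 < t → ∀ x, Λ (anisoScale α t x) = (t : ℂ) * Λ x)
    {lam : ℝ} (hlam : 0 < lam) (t s : ι → ℝ) :
    ∫ y, covarianceIntegrand Λ (anisoScale α lam t) (anisoScale α lam s) y =
      ((lam ^ (2 + ∑ i, 1 / α i) : ℝ) : ℂ) * ∫ y, covarianceIntegrand Λ t s y := by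
  have hjac : |∏ k, lam⁻¹ ^ (1 / α k)|⁻¹ = lam ^ ∑ i, 1 / α i := by
    rw [← Real.rpow_sum_of_pos (inv_pos.2 hlam), abs_of_pos (by positivity),
      Real.inv_rpow hlam.le, inv_inv]
  have hsubst : ∫ z, covarianceIntegrand Λ (anisoScale α lam t) (anisoScale α lam s)
      (anisoScale α lam⁻¹ z) =
      lam ^ (∑ i, 1 / α i) • ∫ y, covarianceIntegrand Λ (anisoScale α lam t)
        (anisoScale α lam s) y := by
    rw [← hjac]
    exact integral_comp_mul_pi (fun k => (Real.rpow_pos_of_pos (inv_pos.2 hlam) _).ne') _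
  simp only [covarianceIntegrand_anisoScale hΛh hlam, integral_const_mul] at hsubst
  rw [← inv_smul_smul₀ (Real.rpow_pos_of_pos hlam _).ne' (∫ y, _), ← hsubst,
    Complex.real_smul, ← mul_assoc, ← Complex.ofReal_mul, ← Real.rpow_neg hlam.le, ← Real.rpow_add hlam]
  congr 3
  ring

end Scaling

/-- In the critical regime, the covariance
`C(t,s) = ∫_{ℝ^d} Π_k (e^{i t_k y_k} − 1)(e^{−i s_k y_k} − 1)/(2π|y_k|²) · |Λ(y)|⁻² dy`
is well defined (the integrand is integrable for all `t,s`) and satisfies the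
operator-scaling relation `C(λ^E t, λ^E s) = λ^{2+q(E)} C(t,s)` for all `λ > 0`. -/
theorem critical_covariance_integrable_and_operator_scaling
    {d : ℕ} (α : Fin d → ℝ) (hα : ∀ i, 0 < α i ∧ α i < 1)
    (hq : 2 < ∑ i, 1 / α i)
    (Λ : (Fin d → ℝ) → ℂ) (hΛc : Continuous Λ)
    (hΛh : ∀ t : ℝ, 0 < t → ∀ x : Fin d → ℝ,
      Λ (fun i => t ^ (1 / α i) * x i) = (t : ℂ) * Λ x)
    (hΛ0 : ∀ x : Fin d → ℝ, x ≠ 0 → Λ x ≠ 0)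
    (C : (Fin d → ℝ) → (Fin d → ℝ) → ℂ)
    (hC : ∀ t s : Fin d → ℝ, C t s =
      ∫ y : Fin d → ℝ,
        (∏ k : Fin d,
          (Complex.exp (Complex.I * ((t k * y k : ℝ) : ℂ)) - 1) *
            (Complex.exp (-Complex.I * ((s k * y k : ℝ) : ℂ)) - 1) /
              ((2 * Real.pi * (y k) ^ 2 : ℝ) : ℂ)) *
        ((‖Λ y‖ ^ 2)⁻¹ : ℝ)) :
    (∀ t s : Fin d → ℝ, Integrable (fun y : Fin d → ℝ =>
      (∏ k : Fin d,
          (Complex.exp (Complex.I * ((t k * y k : ℝ) : ℂ)) - 1) *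
            (Complex.exp (-Complex.I * ((s k * y k : ℝ) : ℂ)) - 1) /
              ((2 * Real.pi * (y k) ^ 2 : ℝ) : ℂ)) *
        ((‖Λ y‖ ^ 2)⁻¹ : ℝ))) ∧
    ∀ lam : ℝ, 0 < lam → ∀ t s : Fin d → ℝ,
      C (fun k => lam ^ (1 / α k) * t k) (fun k => lam ^ (1 / α k) * s k) =
        ((lam ^ (2 + ∑ i, 1 / α i) : ℝ) : ℂ) * C t s := by
  have hαpos : ∀ i, 0 < α i := fun i => (hα i).1
  refine ⟨integrable_covarianceIntegrand hαpos hq hΛc hΛh hΛ0, fun lam hlam t s => ?_⟩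
  rw [hC, hC]
  exact integral_covarianceIntegrand_anisoScale hΛh hlam t s
end

section
/- For an integer m ≥ 0 and x ∈ ℝ let D_m(x) = Σ_{l=0}^{m} e^{ilx} (with D_m = 0 when m < 0). Then for every δ ∈ (0,1), every integer n ≥ 1, every t ∈ [0,1], and every y ∈ ℝ with |y| ≤ πn, one has n^{-2} |D_{⌊nt⌋−1}(y/n)|² ≤ (π²/2^{1−δ}) · t^{1−δ} · min{1, |y|^{−(1+δ)}}. -/
open Complex

/-!
With `x = y / n`, the partial sum `D` of `e^{ilx}` over `l < ⌊nt⌋` satisfies the trivial bound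
`‖D‖ ≤ ⌊nt⌋ ≤ nt` and, by summing the geometric series and Jordan's inequality
`|sin (x/2)| ≥ |x|/π` (valid as `|x| ≤ π`), the bound `‖D‖ ≤ π/|x| = πn/|y|`. Hence
`s = ‖D‖/n ≤ min t (π/|y|)`, and splitting `s² = s^(1-δ) s^(1+δ)` interpolates the two bounds;
the constant `π²/2^(1-δ)` dominates `π^(1+δ) ≥ 1`.
-/

namespace Dirichlet

open Finset Real

theorem exp_I_mul_natCast_mul_eq_pow (x : ℝ) (l : ℕ) :
    Complex.exp (I * l * x) = Complex.exp (I * x) ^ l := by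
  rw [← Complex.exp_nat_mul]; ring_nf

theorem norm_sum_exp_le_card (x : ℝ) (m : ℕ) :
    ‖∑ l ∈ range m, Complex.exp (I * l * x)‖ ≤ m := by
  simpa [exp_I_mul_natCast_mul_eq_pow, Complex.norm_exp_I_mul_ofReal] using
    norm_sum_le (range m) fun l : ℕ => Complex.exp (I * l * x)

theorem abs_sin_half_mul_norm_sum_exp_le_one (x : ℝ) (m : ℕ) :
    |Real.sin (x / 2)| * ‖∑ l ∈ range m, Complex.exp (I * l * x)‖ ≤ 1 := by
  have hgeom : ‖∑ l ∈ range m, Complex.exp (I * l * x)‖ * ‖Complex.exp (I * x) - 1‖ =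
      ‖Complex.exp (I * x) ^ m - 1‖ := by
    simp_rw [← norm_mul, exp_I_mul_natCast_mul_eq_pow, geom_sum_mul]
  rw [Complex.norm_exp_I_mul_ofReal_sub_one, norm_mul, Real.norm_two, Real.norm_eq_abs] at hgeom
  have hnum : ‖Complex.exp (I * x) ^ m - 1‖ ≤ 2 := by
    simpa [Complex.norm_exp_I_mul_ofReal, one_add_one_eq_two] using
      norm_sub_le (Complex.exp (I * x) ^ m) 1
  linarith

theorem abs_div_pi_le_abs_sin_half {x : ℝ} (hx : |x| ≤ π) : |x| / π ≤ |Real.sin (x / 2)| := by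
  have := Real.mul_abs_le_abs_sin (x := x / 2) (by rw [abs_div, abs_two]; linarith)
  rw [abs_div, abs_two] at this
  convert this using 1
  field_simp

theorem norm_sum_exp_le_pi_div {x : ℝ} (hx : |x| ≤ π) (hx₀ : x ≠ 0) (m : ℕ) :
    ‖∑ l ∈ range m, Complex.exp (I * l * x)‖ ≤ π / |x| := by
  set A := ‖∑ l ∈ range m, Complex.exp (I * l * x)‖
  rw [le_div_iff₀' (abs_pos.mpr hx₀)]
  calc |x| * A = π * (|x| / π * A) := by field_simp
    _ ≤ π * (|Real.sin (x / 2)| * A) := by gcongr; exact abs_div_pi_le_abs_sin_half hx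
    _ ≤ π := mul_le_of_le_one_right Real.pi_pos.le (abs_sin_half_mul_norm_sum_exp_le_one x m)

theorem sq_le_rpow_mul_rpow {s a b δ : ℝ} (hs : 0 ≤ s) (ha : s ≤ a) (hb : s ≤ b)
    (hδ₀ : -1 ≤ δ) (hδ₁ : δ ≤ 1) : s ^ 2 ≤ a ^ (1 - δ) * b ^ (1 + δ) := by
  calc s ^ 2 = s ^ ((1 - δ) + (1 + δ)) := by norm_num
    _ = s ^ (1 - δ) * s ^ (1 + δ) := Real.rpow_add' hs (by norm_num)
    _ ≤ a ^ (1 - δ) * b ^ (1 + δ) := by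
      have := Real.rpow_nonneg (hs.trans ha) (1 - δ)
      gcongr; linarith

theorem pi_rpow_one_add_le {δ : ℝ} (hδ : δ ≤ 1) : π ^ (1 + δ) ≤ π ^ 2 / 2 ^ (1 - δ) := by
  rw [le_div_iff₀ (by positivity)]
  calc π ^ (1 + δ) * 2 ^ (1 - δ) ≤ π ^ (1 + δ) * π ^ (1 - δ) := by
        gcongr; exact Real.two_le_pi
    _ = π ^ 2 := by rw [← Real.rpow_add Real.pi_pos]; norm_num

theorem sq_le_pi_sq_div_mul_rpow {δ s t y : ℝ} (hδ₀ : -1 ≤ δ) (hδ₁ : δ ≤ 1) (hs : 0 ≤ s)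
    (hst : s ≤ t) (ht : t ≤ 1) (hsy : y ≠ 0 → s ≤ π / |y|) :
    s ^ 2 ≤ π ^ 2 / 2 ^ (1 - δ) * t ^ (1 - δ) *
      (if y = 0 then 1 else min 1 (|y| ^ (-(1 + δ)))) := by
  have hπ : π ^ (1 + δ) ≤ π ^ 2 / 2 ^ (1 - δ) := pi_rpow_one_add_le hδ₁
  have ht₀ : 0 ≤ t ^ (1 - δ) := Real.rpow_nonneg (hs.trans hst) _
  rcases lt_or_ge |y| 1 with hy | hy
  · have hmin : (if y = 0 then 1 else min 1 (|y| ^ (-(1 + δ)))) = (1 : ℝ) := by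
      split_ifs with hy₀
      · rfl
      · exact min_eq_left (Real.one_le_rpow_of_pos_of_le_one_of_nonpos (abs_pos.mpr hy₀) hy.le
          (by linarith))
    have hπ₁ : 1 ≤ π ^ (1 + δ) := Real.one_le_rpow (by linarith [Real.pi_gt_three]) (by linarith)
    rw [hmin, mul_one]
    calc s ^ 2 ≤ t ^ (1 - δ) * 1 ^ (1 + δ) := sq_le_rpow_mul_rpow hs hst (hst.trans ht) hδ₀ hδ₁
      _ ≤ π ^ 2 / 2 ^ (1 - δ) * t ^ (1 - δ) := by
          rw [Real.one_rpow, mul_one]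
          exact le_mul_of_one_le_left ht₀ (hπ₁.trans hπ)
  · have hy₀ : y ≠ 0 := abs_pos.mp (one_pos.trans_le hy)
    rw [if_neg hy₀, min_eq_right (Real.rpow_le_one_of_one_le_of_nonpos hy (by linarith))]
    calc s ^ 2 ≤ t ^ (1 - δ) * (π / |y|) ^ (1 + δ) :=
          sq_le_rpow_mul_rpow hs hst (hsy hy₀) hδ₀ hδ₁
      _ = π ^ (1 + δ) * t ^ (1 - δ) * |y| ^ (-(1 + δ)) := by
          rw [Real.div_rpow Real.pi_pos.le (abs_nonneg y), Real.rpow_neg (abs_nonneg y)]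
          ring
      _ ≤ π ^ 2 / 2 ^ (1 - δ) * t ^ (1 - δ) * |y| ^ (-(1 + δ)) := by gcongr

end Dirichlet

open Dirichlet in
/-- Bound on the Dirichlet-type kernel `D_m(x) = Σ_{l=0}^m e^{ilx}`:
for `δ ∈ (0,1)`, `n ≥ 1`, `t ∈ [0,1]` and `|y| ≤ πn`,
`n⁻² |D_{⌊nt⌋−1}(y/n)|² ≤ (π²/2^{1−δ}) t^{1−δ} min{1, |y|^{−(1+δ)}}`
(with the convention that the minimum equals `1` when `y = 0`). -/
theorem dirichlet_kernel_bound
    (δ : ℝ) (hδ : δ ∈ Set.Ioo (0 : ℝ) 1) (n : ℕ) (hn : 1 ≤ n)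
    (t : ℝ) (ht : t ∈ Set.Icc (0 : ℝ) 1) (y : ℝ) (hy : |y| ≤ Real.pi * n) :
    ((n : ℝ)⁻¹) ^ 2 *
        ‖∑ l ∈ Finset.range (⌊(n : ℝ) * t⌋.toNat),
          Complex.exp (Complex.I * (l : ℂ) * ((y / n : ℝ) : ℂ))‖ ^ 2
      ≤ (Real.pi ^ 2 / (2 : ℝ) ^ (1 - δ)) * t ^ (1 - δ) *
          (if y = 0 then 1 else min 1 (|y| ^ (-(1 + δ)))) := by
  have hn₀ : (0 : ℝ) < n := by exact_mod_cast hn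
  rw [Int.floor_toNat, ← mul_pow]
  refine sq_le_pi_sq_div_mul_rpow (by linarith [hδ.1]) hδ.2.le (by positivity) ?_ ht.2 ?_
  · rw [inv_mul_le_iff₀ hn₀]
    exact (norm_sum_exp_le_card _ _).trans (Nat.floor_le (mul_nonneg hn₀.le ht.1))
  · intro hy₀
    have hx : |y / n| ≤ Real.pi := by
      rwa [abs_div, Nat.abs_cast, div_le_iff₀ hn₀]
    calc _ ≤ (n : ℝ)⁻¹ * (Real.pi / |y / n|) := by
          gcongr; exact norm_sum_exp_le_pi_div hx (div_ne_zero hy₀ hn₀.ne') _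
      _ = Real.pi / |y| := by rw [abs_div, Nat.abs_cast]; field_simp
end
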